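/- arXiv:1007.2484 — 3 statements merged into one kernel-verified Lean document; each statement's English description precedes it below -/
import Mathlib

section
/- Let H = (V,E) be a finite graph, k a positive integer, and α : V → ℕ. There exists a k-fractional orientation of H in which every vertex v has outdegree α(v) if and only if (a) Σ_{v∈V} α(v) = k·|E|, and (b) for every connected subset S ⊆ V, Σ_{v∈S} α(v) ≥ k·|E_S|, where E_S is the set of edges with both endpoints in S. -/
open scoped Classical

noncomputable section

/-- A finite loopless multigraph: edges are abstract objects with an unordered pair of
distinct endpoints. -/
structure Multigraph where
  V : Type
  E : Type
  [finV : Fintype V]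
  [finE : Fintype E]
  [decV : DecidableEq V]
  [decE : DecidableEq E]
  ends : E → Sym2 V
  loopless : ∀ e, ¬ (ends e).IsDiag

attribute [instance] Multigraph.finV Multigraph.finE Multigraph.decV Multigraph.decE

namespace Multigraph

variable (H : Multigraph)

/-- A `k`-fractional orientation: `ω v e` is the value of the arc of `e` with origin `v`;
the two arc values of each edge sum to `k`, and non-incident pairs get value `0`. -/
def IsKOrient (k : ℕ) (ω : H.V → H.E → ℕ) : Prop :=
  (∀ e u v, H.ends e = s(u, v) → ω u e + ω v e = k) ∧
  (∀ u e, u ∉ H.ends e → ω u e = 0)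

/-- The outdegree of a vertex in a fractional orientation. -/
def outdeg (ω : H.V → H.E → ℕ) (v : H.V) : ℕ := ∑ e : H.E, ω v e

/-- `S` is a (nonempty) connected subset of vertices: any two vertices of `S` are linked by a
path using edges with both ends in `S`. -/
def ConnSub (S : Finset H.V) : Prop :=
  S.Nonempty ∧ ∀ u ∈ S, ∀ v ∈ S,
    Relation.ReflTransGen (fun a b => a ∈ S ∧ b ∈ S ∧ ∃ e, H.ends e = s(a, b)) u v

/-- The set `E_S` of edges with both endpoints in `S`. -/
def edgesIn (S : Finset H.V) : Finset H.E :=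
  Finset.univ.filter (fun e => ∀ v ∈ H.ends e, v ∈ S)

end Multigraph

/-!
Necessity is counting: the two arcs of an edge inside `S` contribute exactly `k` to the
outdegrees of `S`. For sufficiency take a `k`-fractional orientation minimising the total
deviation `∑ |outdeg v - α v|`. If it is positive, some `v` has excess outdegree; let `S` be the
set of vertices reachable from `v` along arcs of positive value. Then `S` is connected and no
positive arc leaves it, so `∑_{S} outdeg = k |E_S| ≤ ∑_{S} α`, and `S` contains a vertex `u` of
deficient outdegree. Moving one unit along a simple path of positive arcs from `v` to `u` lowers
the deviation.
-/

theorem List.exists_nodup_isChain_cons_of_relationReflTransGen {α : Type*} {r : α → α → Prop}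
    {a b : α} (h : Relation.ReflTransGen r a b) :
    ∃ l, List.IsChain r (a :: l) ∧ (a :: l).getLast (List.cons_ne_nil _ _) = b ∧
      (a :: l).Nodup := by
  induction h using Relation.ReflTransGen.head_induction_on with
  | refl => exact ⟨[], by simp, rfl, by simp⟩
  | @head a c hac _ ih =>
    obtain ⟨l, hchain, hlast, hnodup⟩ := ih
    by_cases ha : a ∈ c :: l
    · obtain ⟨l₁, l₂, hsplit⟩ := List.append_of_mem ha
      simp_rw [hsplit] at hchain hlast hnodup
      refine ⟨l₂, hchain.right_of_append, ?_, hnodup.sublist (List.sublist_append_right _ _)⟩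
      rwa [List.getLast_append_of_ne_nil _ (List.cons_ne_nil _ _)] at hlast
    · exact ⟨c :: l, List.isChain_cons_cons.2 ⟨hac, hchain⟩, by simpa using hlast,
        List.nodup_cons.2 ⟨ha, hnodup⟩⟩

namespace Multigraph

variable {H : Multigraph} {k : ℕ}

lemma exists_ends (e : H.E) : ∃ a b, H.ends e = s(a, b) ∧ a ≠ b := by
  induction h : H.ends e using Sym2.ind with
  | _ a b => exact ⟨a, b, rfl, fun hab => H.loopless e (by simp [h, hab])⟩

lemma exists_isKOrient (k : ℕ) : ∃ ω, H.IsKOrient k ω := by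
  choose s t hst hne using fun e : H.E => exists_ends e
  refine ⟨fun v e => if v = s e then k else 0, fun e u v he => ?_, fun u e hu => ?_⟩
  · rw [hst, Sym2.eq_iff] at he
    rcases he with ⟨rfl, rfl⟩ | ⟨rfl, rfl⟩ <;> simp [(hne e).symm]
  · exact if_neg fun h => hu (by rw [hst, h]; exact Sym2.mem_mk_left _ _)

section Counting

variable {ω : H.V → H.E → ℕ}

lemma sum_apply_of_mem_edgesIn (hω : H.IsKOrient k ω) {S : Finset H.V} {e : H.E}
    (he : e ∈ H.edgesIn S) : ∑ v ∈ S, ω v e = k := by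
  obtain ⟨a, b, hab, hne⟩ := exists_ends e
  have hS : ∀ v ∈ H.ends e, v ∈ S := by simpa [edgesIn] using he
  have hsub : {a, b} ⊆ S := by
    simp [Finset.insert_subset_iff, hS, hab]
  rw [← Finset.sum_subset hsub fun v _ hv => hω.2 v e (by simpa [hab] using hv),
    Finset.sum_pair hne, hω.1 e a b hab]

lemma sum_sum_edgesIn (hω : H.IsKOrient k ω) (S : Finset H.V) :
    ∑ e ∈ H.edgesIn S, ∑ v ∈ S, ω v e = k * (H.edgesIn S).card := by
  rw [Finset.sum_congr rfl fun e he => sum_apply_of_mem_edgesIn hω he, Finset.sum_const,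
    smul_eq_mul, mul_comm]

lemma mul_card_edgesIn_le_sum_outdeg (hω : H.IsKOrient k ω) (S : Finset H.V) :
    k * (H.edgesIn S).card ≤ ∑ v ∈ S, H.outdeg ω v := by
  unfold outdeg
  rw [← sum_sum_edgesIn hω S, Finset.sum_comm (s := S)]
  exact Finset.sum_le_sum_of_subset (Finset.subset_univ _)

/-- `ω` gives positive value to an arc from `x` to `y`, so a unit can be moved from `x` to `y`. -/
def PosArc (ω : H.V → H.E → ℕ) (x y : H.V) : Prop := ∃ e, H.ends e = s(x, y) ∧ 0 < ω x e

lemma apply_eq_zero_of_not_mem_edgesIn (hω : H.IsKOrient k ω) {S : Finset H.V}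
    (hS : ∀ x ∈ S, ∀ y, H.PosArc ω x y → y ∈ S) {x : H.V} (hx : x ∈ S) {e : H.E}
    (he : e ∉ H.edgesIn S) : ω x e = 0 := by
  by_contra hpos
  obtain ⟨y, hy⟩ := Sym2.mem_iff_exists.1 (not_imp_comm.1 (hω.2 x e) hpos)
  have hyS : y ∈ S := hS x hx y ⟨e, hy, Nat.pos_of_ne_zero hpos⟩
  exact he (by simp [edgesIn, hy, hx, hyS])

lemma sum_outdeg_of_closed (hω : H.IsKOrient k ω) {S : Finset H.V}
    (hS : ∀ x ∈ S, ∀ y, H.PosArc ω x y → y ∈ S) :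
    ∑ v ∈ S, H.outdeg ω v = k * (H.edgesIn S).card := by
  unfold outdeg
  rw [← sum_sum_edgesIn hω S, Finset.sum_comm (s := S)]
  exact (Finset.sum_subset (Finset.subset_univ _) fun e _ he =>
    Finset.sum_eq_zero fun x hx => apply_eq_zero_of_not_mem_edgesIn hω hS hx he).symm

lemma sum_outdeg (hω : H.IsKOrient k ω) :
    ∑ v, H.outdeg ω v = k * Fintype.card H.E := by
  simpa [edgesIn] using sum_outdeg_of_closed hω (S := Finset.univ) (by simp)

end Counting

/-- Move one unit of the edge `e` from its arc leaving `a` to its arc leaving `b`. -/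
def push (ω : H.V → H.E → ℕ) (e : H.E) (a b : H.V) : H.V → H.E → ℕ := fun x f =>
  if f ≠ e then ω x f else if x = a then ω x f - 1 else if x = b then ω x f + 1 else ω x f

section Push

variable {ω : H.V → H.E → ℕ} {e : H.E} {a b : H.V}

lemma push_of_ne {f : H.E} (hf : f ≠ e) (x : H.V) : push ω e a b x f = ω x f := if_pos hf

lemma push_self_add (hab : a ≠ b) (hpos : 0 < ω a e) (x : H.V) :
    push ω e a b x e + (if x = a then 1 else 0) = ω x e + (if x = b then 1 else 0) := by
  simp only [push, ne_eq, not_true_eq_false, if_false]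
  by_cases hxa : x = a
  · subst hxa
    simp only [↓reduceIte, hab, add_zero]
    omega
  · by_cases hxb : x = b
    · subst hxb
      simp [hxa]
    · simp [hxa, hxb]

lemma isKOrient_push (hω : H.IsKOrient k ω) (he : H.ends e = s(a, b)) (hab : a ≠ b)
    (hpos : 0 < ω a e) : H.IsKOrient k (push ω e a b) := by
  refine ⟨fun f u v hf => ?_, fun u f hu => ?_⟩
  · by_cases hfe : f = e
    · subst hfe
      have hu := push_self_add hab hpos u
      have hv := push_self_add hab hpos v
      have huv := hω.1 f u v hf
      rw [he, Sym2.eq_iff] at hf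
      rcases hf with ⟨rfl, rfl⟩ | ⟨rfl, rfl⟩ <;>
        simp only [↓reduceIte, hab, hab.symm, add_zero] at hu hv <;> omega
    · rw [push_of_ne hfe, push_of_ne hfe]
      exact hω.1 f u v hf
  · by_cases hfe : f = e
    · subst hfe
      have hne : u ≠ a ∧ u ≠ b := by simpa [he] using hu
      have hpush := push_self_add hab hpos u
      simp only [hne, if_false, add_zero] at hpush
      rw [hpush]
      exact hω.2 u f hu
    · rw [push_of_ne hfe]
      exact hω.2 u f hu

lemma outdeg_push_add (hab : a ≠ b) (hpos : 0 < ω a e) (x : H.V) :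
    H.outdeg (push ω e a b) x + (if x = a then 1 else 0) =
      H.outdeg ω x + (if x = b then 1 else 0) := by
  unfold outdeg
  rw [← Finset.add_sum_erase _ _ (Finset.mem_univ e),
    ← Finset.add_sum_erase _ _ (Finset.mem_univ e),
    Finset.sum_congr rfl fun f hf => push_of_ne (Finset.ne_of_mem_erase hf) x]
  have := push_self_add hab hpos x
  omega

lemma PosArc.push {x y : H.V} (h : H.PosArc ω x y) (hxa : x ≠ a) :
    H.PosArc (push ω e a b) x y := by
  obtain ⟨f, hf, hpos⟩ := h
  refine ⟨f, hf, ?_⟩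
  unfold Multigraph.push
  split_ifs <;> omega

end Push

lemma exists_isKOrient_outdeg_add {ω : H.V → H.E → ℕ} (hω : H.IsKOrient k ω) {a : H.V}
    {l : List H.V} (hchain : (a :: l).IsChain (H.PosArc ω)) (hnodup : (a :: l).Nodup) :
    ∃ ω', H.IsKOrient k ω' ∧ ∀ x, H.outdeg ω' x + (if x = a then 1 else 0) =
      H.outdeg ω x + (if x = (a :: l).getLast (List.cons_ne_nil _ _) then 1 else 0) := by
  induction l generalizing a ω with
  | nil => exact ⟨ω, hω, fun x => rfl⟩
  | cons w l ih =>
    obtain ⟨⟨e, he, hpos⟩, hchain⟩ := List.isChain_cons_cons.1 hchain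
    obtain ⟨ha, hnodup⟩ := List.nodup_cons.1 hnodup
    have haw : a ≠ w := fun h => ha (h ▸ List.mem_cons_self)
    -- only arcs leaving `a` lost value, and `a` does not occur again on the path
    have hchain' : (w :: l).IsChain (H.PosArc (push ω e a w)) :=
      hchain.imp_of_mem_imp fun x _ hx _ hxy => hxy.push fun hxa => ha (hxa ▸ hx)
    obtain ⟨ω', hω', hdeg⟩ := ih (isKOrient_push hω he haw hpos) hchain' hnodup
    refine ⟨ω', hω', fun x => ?_⟩
    have := outdeg_push_add haw hpos x
    have := hdeg x
    rw [List.getLast_cons_cons]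
    omega

/-- The total deviation `∑ |outdeg ω v - α v|` of the outdegrees from the target `α`. -/
def deviation (α : H.V → ℕ) (ω : H.V → H.E → ℕ) : ℕ :=
  ∑ v, ((H.outdeg ω v - α v) + (α v - H.outdeg ω v))

lemma deviation_lt {α : H.V → ℕ} {ω ω' : H.V → H.E → ℕ} {a b : H.V}
    (hdeg : ∀ x, H.outdeg ω' x + (if x = a then 1 else 0) =
      H.outdeg ω x + (if x = b then 1 else 0))
    (ha : α a < H.outdeg ω a) (hb : H.outdeg ω b < α b) :
    H.deviation α ω' < H.deviation α ω := by
  have hab : a ≠ b := by rintro rfl; omega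
  refine Finset.sum_lt_sum (fun x _ => ?_) ⟨a, Finset.mem_univ a, ?_⟩
  · have := hdeg x
    by_cases hxa : x = a
    · subst hxa
      simp only [↓reduceIte, hab, add_zero] at this
      omega
    · by_cases hxb : x = b
      · subst hxb
        simp only [↓reduceIte, hxa, add_zero] at this
        omega
      · simp only [↓reduceIte, hxa, hxb, add_zero] at this
        omega
  · have := hdeg a
    simp only [↓reduceIte, hab, add_zero] at this
    omega

lemma connSub_reachable {R : H.V → H.V → Prop} (hR : ∀ x y, R x y → ∃ e, H.ends e = s(x, y))
    (v : H.V) : H.ConnSub (Finset.univ.filter (Relation.ReflTransGen R v)) := by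
  set S := Finset.univ.filter (Relation.ReflTransGen R v)
  have hmem : ∀ u, u ∈ S ↔ Relation.ReflTransGen R v u := by simp [S]
  let Adj := fun a b => a ∈ S ∧ b ∈ S ∧ ∃ e, H.ends e = s(a, b)
  have hboth : ∀ u, Relation.ReflTransGen R v u →
      Relation.ReflTransGen Adj v u ∧ Relation.ReflTransGen Adj u v := by
    intro u hu
    induction hu with
    | refl => exact ⟨.refl, .refl⟩
    | @tail b c hvb hbc ih =>
      obtain ⟨e, he⟩ := hR b c hbc
      have hb := (hmem b).2 hvb
      have hc := (hmem c).2 (hvb.tail hbc)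
      exact ⟨ih.1.tail ⟨hb, hc, e, he⟩, ih.2.head ⟨hc, hb, e, he.trans Sym2.eq_swap⟩⟩
  exact ⟨⟨v, (hmem v).2 .refl⟩, fun a ha b hb =>
    (hboth a ((hmem a).1 ha)).2.trans (hboth b ((hmem b).1 hb)).1⟩

lemma exists_reflTransGen_posArc_outdeg_lt {ω : H.V → H.E → ℕ} (hω : H.IsKOrient k ω)
    {α : H.V → ℕ} (hconn : ∀ S, H.ConnSub S → k * (H.edgesIn S).card ≤ ∑ v ∈ S, α v)
    {v : H.V} (hv : α v < H.outdeg ω v) :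
    ∃ u, Relation.ReflTransGen (H.PosArc ω) v u ∧ H.outdeg ω u < α u := by
  by_contra! hreach
  set S := Finset.univ.filter (Relation.ReflTransGen (H.PosArc ω) v)
  have hclosed : ∀ x ∈ S, ∀ y, H.PosArc ω x y → y ∈ S := by
    intro x hx y hxy
    simp only [S, Finset.mem_filter, Finset.mem_univ, true_and] at hx ⊢
    exact hx.tail hxy
  have hlt : ∑ x ∈ S, α x < ∑ x ∈ S, H.outdeg ω x :=
    Finset.sum_lt_sum (fun x hx => hreach x (by simpa [S] using hx))
      ⟨v, by simp [S, Relation.ReflTransGen.refl], hv⟩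
  have hle := hconn S (connSub_reachable (fun x y ⟨e, he, _⟩ => ⟨e, he⟩) v)
  rw [← sum_outdeg_of_closed hω hclosed] at hle
  omega

lemma exists_deviation_lt {ω : H.V → H.E → ℕ} (hω : H.IsKOrient k ω) {α : H.V → ℕ}
    (hsum : ∑ v, α v = k * Fintype.card H.E)
    (hconn : ∀ S, H.ConnSub S → k * (H.edgesIn S).card ≤ ∑ v ∈ S, α v)
    {v₀ : H.V} (hv₀ : H.outdeg ω v₀ ≠ α v₀) :
    ∃ ω', H.IsKOrient k ω' ∧ H.deviation α ω' < H.deviation α ω := by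
  obtain ⟨v, hv⟩ : ∃ v, α v < H.outdeg ω v := by
    by_contra! hle
    refine hv₀ ((Finset.sum_eq_sum_iff_of_le fun x _ => hle x).1 ?_ v₀ (Finset.mem_univ _))
    rw [sum_outdeg hω, hsum]
  obtain ⟨u, hvu, hu⟩ := exists_reflTransGen_posArc_outdeg_lt hω hconn hv
  obtain ⟨l, hchain, rfl, hnodup⟩ := List.exists_nodup_isChain_cons_of_relationReflTransGen hvu
  obtain ⟨ω', hω', hdeg⟩ := exists_isKOrient_outdeg_add hω hchain hnodup
  exact ⟨ω', hω', deviation_lt hdeg hv hu⟩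

end Multigraph

theorem stmt2_general (H : Multigraph) (k : ℕ) (α : H.V → ℕ) :
    (∃ ω : H.V → H.E → ℕ, H.IsKOrient k ω ∧ ∀ v, H.outdeg ω v = α v) ↔
      ((∑ v : H.V, α v) = k * Fintype.card H.E ∧
        ∀ S : Finset H.V, H.ConnSub S → k * (H.edgesIn S).card ≤ ∑ v ∈ S, α v) := by
  constructor
  · rintro ⟨ω, hω, hα⟩
    obtain rfl : α = H.outdeg ω := funext fun v => (hα v).symm
    exact ⟨Multigraph.sum_outdeg hω, fun S _ => Multigraph.mul_card_edgesIn_le_sum_outdeg hω S⟩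
  · rintro ⟨hsum, hconn⟩
    obtain ⟨ω, hω, hmin⟩ := exists_minimalFor_of_wellFoundedLT (H.IsKOrient k) (H.deviation α)
      (H.exists_isKOrient k)
    refine ⟨ω, hω, fun v => by_contra fun hv => ?_⟩
    obtain ⟨ω', hω', hlt⟩ := Multigraph.exists_deviation_lt hω hsum hconn hv
    exact (hmin hω' hlt.le).not_gt hlt

/-- A graph `H` has a `k`-fractional orientation with outdegree `α(v)` at every
vertex `v` iff `Σ α(v) = k·|E|` and `Σ_{v∈S} α(v) ≥ k·|E_S|` for every connected `S ⊆ V`. -/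
theorem stmt2 (H : Multigraph) (k : ℕ) (hk : 0 < k) (α : H.V → ℕ) :
    (∃ ω : H.V → H.E → ℕ, H.IsKOrient k ω ∧ ∀ v, H.outdeg ω v = α v) ↔
      ((∑ v : H.V, α v) = k * Fintype.card H.E ∧
        ∀ S : Finset H.V, H.ConnSub S → k * (H.edgesIn S).card ≤ ∑ v ∈ S, α v) :=
  stmt2_general H k α
end
end

section
/- In a Schnyder decomposition of a d-angulation of girth d, no forest F_i contains a directed cycle; equivalently, every monochromatic directed path starting at an internal vertex eventually reaches an external vertex. -/
open scoped Classical

noncomputable section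

/-- The setoid identifying elements lying on the same cycle of a permutation. -/
def sameCycleSetoid {α : Type*} (f : Equiv.Perm α) : Setoid α :=
  ⟨f.SameCycle, ⟨fun _ => Equiv.Perm.SameCycle.refl f _, fun h => h.symm, fun h h' => h.trans h'⟩⟩

/-- A connected plane map all of whose faces have degree `d` (a `d`-angulation), encoded as a
rotation system on darts: `σ` is the clockwise rotation around vertices, `θ` the dart reversal.
Vertices are the `σ`-cycles, edges the `θ`-cycles, faces the `σ * θ`-cycles; planarity is the
Euler relation `V + F = E + 2`.  The external face is enumerated by `outer`. -/
structure PlaneDAng (d : ℕ) where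
  D : Type
  [finD : Fintype D]
  [decD : DecidableEq D]
  σ : Equiv.Perm D
  θ : Equiv.Perm D
  θ_invol : Function.Involutive ⇑θ
  θ_ne : ∀ a, θ a ≠ a
  nonemptyD : Nonempty D
  connected : ∀ a b : D, Relation.ReflTransGen (fun x y => y = σ x ∨ y = θ x) a b
  euler : Nat.card (Quotient (sameCycleSetoid σ)) + Nat.card (Quotient (sameCycleSetoid (σ * θ)))
        = Nat.card (Quotient (sameCycleSetoid θ)) + 2
  outer : ZMod d → D
  outer_face : ∀ i, (σ * θ) (outer i) = outer (i + 1)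
  outer_inj : Function.Injective outer
  face_deg : ∀ a : D, Function.minimalPeriod ⇑(σ * θ) a = d

attribute [instance] PlaneDAng.finD PlaneDAng.decD

namespace PlaneDAng

variable {d : ℕ} (M : PlaneDAng d)

/-- Two darts have the same initial vertex. -/
def SameVert (a b : M.D) : Prop := M.σ.SameCycle a b

/-- The vertex of `a` is an external vertex (`uᵢ` being the vertex of `outer i`). -/
def ExtVert (a : M.D) : Prop := ∃ i, M.σ.SameCycle a (M.outer i)

/-- The edge of `a` is an external edge. -/
def ExtEdge (a : M.D) : Prop := ∃ i, M.outer i = a ∨ M.outer i = M.θ a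

/-- The darts with the same initial vertex as `a`, i.e. the arcs going out of that vertex. -/
def vertexDarts (a : M.D) : Finset M.D := Finset.univ.filter (fun b => M.σ.SameCycle a b)

/-- A simple cycle of length `ℓ` in the underlying graph of the map: a cyclic sequence of darts,
consecutive ones sharing a vertex, with pairwise distinct vertices and pairwise distinct edges. -/
def IsCycle (ℓ : ℕ) (c : ZMod ℓ → M.D) : Prop :=
  0 < ℓ ∧ (∀ i, M.σ.SameCycle (M.θ (c i)) (c (i + 1))) ∧
    (∀ i j, M.σ.SameCycle (c i) (c j) → i = j) ∧
    (∀ i j, c i = c j ∨ c i = M.θ (c j) → i = j)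

/-- The girth of the map is `g`: there is a cycle of length `g` and no shorter cycle. -/
def HasGirth (g : ℕ) : Prop :=
  (∃ c : ZMod g → M.D, M.IsCycle g c) ∧ ∀ ℓ (c : ZMod ℓ → M.D), M.IsCycle ℓ c → g ≤ ℓ

end PlaneDAng

/-- `cycDist n x y` is the number of clockwise steps from position `x` to position `y` in a
cyclic sequence of length `n` (positions taken in `{0,…,n-1}`). -/
def cycDist (n x y : ℕ) : ℕ := (y + n - x) % n

/-- `y` lies strictly between `x` and `z` in clockwise cyclic order (length `n`). -/
def cycBetween (n x y z : ℕ) : Prop := 0 < cycDist n x y ∧ cycDist n x y < cycDist n x z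

namespace PlaneDAng

variable {d : ℕ} (M : PlaneDAng d)

/-- The conditions on a Schnyder decomposition that do not assert the forest (acyclicity)
property.  `Col a` is the set of colors `i ∈ ℤ/dℤ` of the forests `Fᵢ` using the arc `a`:
* `disj`/`edge_count`/`ext_edge`: every internal edge carries exactly `d - 2` colors,
  each in one of its two directions, and external edges carry no color (condition (i));
* `root_out`/`avoid`/`span`: arcs out of external vertices carry no color, the forest `Fᵢ`
  avoids the external vertices `uᵢ, u_{i+1}` and reaches every other external vertex, each
  internal vertex has exactly one outgoing arc of each color (condition (ii), except that the
  subgraphs are forests oriented towards the external vertices);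
* `cw`: around each internal vertex the outgoing arcs of colors `1,…,d` appear in clockwise
  order (positions `p i` weakly increasing along the clockwise rotation `σ`), and every
  incoming arc of color `i` lies strictly between the outgoing arcs of colors `i+1` and
  `i-1` in clockwise order (condition (iii)). -/
structure IsSchnyderData (Col : M.D → Finset (ZMod d)) : Prop where
  disj : ∀ a, Disjoint (Col a) (Col (M.θ a))
  ext_edge : ∀ a, M.ExtEdge a → Col a = ∅
  edge_count : ∀ a, ¬ M.ExtEdge a → (Col a).card + (Col (M.θ a)).card = d - 2
  root_out : ∀ a, M.ExtVert a → Col a = ∅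
  avoid : ∀ (i : ZMod d) (a : M.D), M.σ.SameCycle (M.outer i) a →
      i ∉ Col a ∧ i ∉ Col (M.θ a) ∧ i - 1 ∉ Col a ∧ i - 1 ∉ Col (M.θ a)
  span : ∀ i j : ZMod d, j ≠ i → j ≠ i + 1 →
      ∃ a, M.σ.SameCycle (M.outer j) a ∧ i ∈ Col (M.θ a)
  out_unique : ∀ a, ¬ M.ExtVert a → ∀ i : ZMod d, ∃! b, M.σ.SameCycle a b ∧ i ∈ Col b
  cw : ∀ a, ¬ M.ExtVert a → ∃ (b : M.D) (p : ZMod d → ℕ),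
      M.σ.SameCycle a b ∧
      (∀ i, p i < Function.minimalPeriod ⇑M.σ b) ∧
      (∀ i j : ZMod d, i.val ≤ j.val → p i ≤ p j) ∧
      (∀ (i : ZMod d) (c : M.D), (M.σ.SameCycle b c ∧ i ∈ Col c) ↔ c = (⇑M.σ)^[p i] b) ∧
      (∀ (i : ZMod d) (c : M.D), M.σ.SameCycle b c → i ∈ Col (M.θ c) →
        ∀ m, m < Function.minimalPeriod ⇑M.σ b → c = (⇑M.σ)^[m] b →
          cycBetween (Function.minimalPeriod ⇑M.σ b) (p (i + 1)) m (p (i - 1)))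

/-- There is a directed cycle of color `i`. -/
def HasMonochromaticCycle (Col : M.D → Finset (ZMod d)) (i : ZMod d) : Prop :=
  ∃ (n : ℕ) (c : ZMod (n + 1) → M.D),
    (∀ k, i ∈ Col (c k)) ∧ ∀ k, M.σ.SameCycle (M.θ (c k)) (c (k + 1))

/-- A Schnyder decomposition: the data conditions together with the requirement that each
colored subgraph is a forest (no monochromatic directed cycle), hence a union of trees
oriented towards the external vertices. -/
structure IsSchnyder (Col : M.D → Finset (ZMod d)) extends M.IsSchnyderData Col : Prop where
  acyclic : ∀ i : ZMod d, ¬ M.HasMonochromaticCycle Col i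

end PlaneDAng

/-!
Let `C` be a directed cycle of color `i`. Over `𝔽₂` the first homology of the sphere vanishes
(a dimension count with Euler's relation), so the edge set of `C` bounds a unique set of faces
avoiding the outer face, the interior of `C`. The clockwise condition at the vertices of `C`
shows that the arcs of one neighbouring color `i ± 1` leaving `C` all enter its interior, so
following that color from `C` one stays in the closed interior of `C` and, the map being finite,
runs into a cycle of color `i ± 1` there. When `C` has minimal area, that cycle encloses exactly
the interior of `C`, so it has the same edges and `C` itself carries the color `i ± 1`, with
the same turning direction. Iterating, an edge of `C` carries `d - 1` colors, but it carries
only `d - 2`. Without monochromatic cycles, every monochromatic walk reaches an external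
vertex.
-/

theorem cycDist_eq_ite {n u v : ℕ} (hu : u < n) (hv : v < n) :
    cycDist n u v = if u ≤ v then v - u else v + n - u := by
  unfold cycDist
  split
  · rw [show v + n - u = (v - u) + n by omega, Nat.add_mod_right]
    exact Nat.mod_eq_of_lt (by omega)
  · exact Nat.mod_eq_of_lt (by omega)

theorem cycDist_lt {n : ℕ} (u v : ℕ) (hn : 0 < n) : cycDist n u v < n := Nat.mod_lt _ hn

theorem cycDist_eq_zero_iff {n u v : ℕ} (hu : u < n) (hv : v < n) :
    cycDist n u v = 0 ↔ u = v := by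
  rw [cycDist_eq_ite hu hv]; split <;> omega

theorem add_cycDist_mod {n u v : ℕ} (hu : u < n) (hv : v < n) :
    (u + cycDist n u v) % n = v := by
  rw [cycDist_eq_ite hu hv]
  split
  · rw [show u + (v - u) = v by omega]; exact Nat.mod_eq_of_lt hv
  · rw [show u + (v + n - u) = v + n by omega, Nat.add_mod_right]
    exact Nat.mod_eq_of_lt hv

/-- If `x, a, b` are weakly in clockwise order and `m` lies strictly between `a` and `b`, then,
seen from `x`, `a` comes no later than `m` and `m` strictly before `b` (unless `b = x`). -/
theorem cycDist_le_and_lt_of_cycBetween {n x a b m : ℕ} (hx : x < n) (ha : a < n) (hb : b < n)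
    (hm : m < n) (hxab : (b ≤ x ∧ x ≤ a) ∨ (x ≤ a ∧ a ≤ b) ∨ (a ≤ b ∧ b ≤ x))
    (hamb : cycBetween n a m b) :
    cycDist n x a ≤ cycDist n x m ∧ (cycDist n x b = 0 ∨ cycDist n x m < cycDist n x b) := by
  obtain ⟨h1, h2⟩ := hamb
  rw [cycDist_eq_ite ha hm] at h1
  rw [cycDist_eq_ite ha hm, cycDist_eq_ite ha hb] at h2
  rw [cycDist_eq_ite hx ha, cycDist_eq_ite hx hm, cycDist_eq_ite hx hb]
  split_ifs at h1 h2 ⊢ <;> omega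

/-- A parity along a cyclic sequence of length `n` that flips exactly when passing the
positions `P` and `Q` is flipped precisely from just after `P` up to `Q`. -/
theorem parity_between_cycDist {n P Q : ℕ} {f : ℕ → ZMod 2} (hP : P < n) (hQ : Q < n)
    (hPQ : P ≠ Q) (hf : ∀ r, f (r + 1) = f r + if r % n = P ∨ r % n = Q then 1 else 0) :
    ∀ r < n, f (P + r) = f P + if 1 ≤ r ∧ r ≤ cycDist n P Q then 1 else 0 := by
  have hΔ := cycDist_eq_ite hP hQ
  intro r
  induction r with
  | zero => intro; simp
  | succ r ih =>
    intro hr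
    have hmod : (P + r) % n = if P + r < n then P + r else P + r - n := by
      split
      · exact Nat.mod_eq_of_lt ‹_›
      · rw [Nat.mod_eq_sub_mod (by omega)]; exact Nat.mod_eq_of_lt (by omega)
    rw [← add_assoc, hf, ih (by omega), hmod]
    split_ifs at hΔ ⊢ <;> first | omega | ring_nf <;> reduce_mod_char

theorem ZMod.cyclicOrder_of_monotone {d : ℕ} (hd : 3 ≤ d) (p : ZMod d → ℕ)
    (hp : ∀ a b : ZMod d, a.val ≤ b.val → p a ≤ p b) (i : ZMod d) :
    (p (i - 1) ≤ p i ∧ p i ≤ p (i + 1)) ∨ (p i ≤ p (i + 1) ∧ p (i + 1) ≤ p (i - 1)) ∨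
      (p (i + 1) ≤ p (i - 1) ∧ p (i - 1) ≤ p i) := by
  have : NeZero d := ⟨by omega⟩
  obtain ⟨k, hk, rfl⟩ : ∃ k < d, (k : ZMod d) = i := ⟨i.val, i.val_lt, ZMod.natCast_zmod_val i⟩
  have hsucc : (k : ZMod d) + 1 = ((k + 1 : ℕ) : ZMod d) := by push_cast; rfl
  have hpred : (k : ZMod d) - 1 = ((k + (d - 1) : ℕ) : ZMod d) := by
    rw [Nat.cast_add, Nat.cast_sub (by omega), ZMod.natCast_self]; ring
  have hmono : ∀ a b : ℕ, a % d ≤ b % d → p a ≤ p b := fun a b h =>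
    hp _ _ (by simpa only [ZMod.val_natCast] using h)
  rw [hsucc, hpred]
  rcases Nat.eq_zero_or_pos k with rfl | hk0
  · refine Or.inr (Or.inl ⟨hmono _ _ ?_, hmono _ _ ?_⟩) <;>
      simp only [Nat.zero_mod, zero_add, Nat.mod_eq_of_lt (show 1 < d by omega),
        Nat.mod_eq_of_lt (show d - 1 < d by omega)] <;> omega
  rcases (show k + 1 = d ∨ k + 1 < d by omega) with hlast | hlt
  · have h1 : (k + 1) % d = 0 := by rw [hlast, Nat.mod_self]
    have h2 : (k + (d - 1)) % d = k - 1 := by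
      rw [show k + (d - 1) = (k - 1) + d by omega, Nat.add_mod_right, Nat.mod_eq_of_lt (by omega)]
    refine Or.inr (Or.inr ⟨hmono _ _ ?_, hmono _ _ ?_⟩) <;>
      simp only [h1, h2, Nat.mod_eq_of_lt hk] <;> omega
  · have h1 : (k + 1) % d = k + 1 := Nat.mod_eq_of_lt hlt
    have h2 : (k + (d - 1)) % d = k - 1 := by
      rw [show k + (d - 1) = (k - 1) + d by omega, Nat.add_mod_right, Nat.mod_eq_of_lt (by omega)]
    refine Or.inl ⟨hmono _ _ ?_, hmono _ _ ?_⟩ <;>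
      simp only [h1, h2, Nat.mod_eq_of_lt hk] <;> omega

theorem Equiv.Perm.minimalPeriod_pos {α : Type*} [Finite α] (f : Equiv.Perm α) (x : α) :
    0 < Function.minimalPeriod f x :=
  Function.minimalPeriod_pos_of_mem_periodicPts (f.injective.mem_periodicPts x)

theorem Equiv.Perm.SameCycle.exists_iterate_lt_minimalPeriod {α : Type*} [Finite α]
    {f : Equiv.Perm α} {x y : α} (h : f.SameCycle x y) :
    ∃ u < Function.minimalPeriod f x, f^[u] x = y := by
  obtain ⟨u, hu⟩ := h.exists_nat_pow_eq
  exact ⟨u % _, Nat.mod_lt _ (f.minimalPeriod_pos x), by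
    rw [Function.iterate_mod_minimalPeriod_eq, Equiv.Perm.iterate_eq_pow, hu]⟩

namespace PlaneDAng

variable {d : ℕ} {M : PlaneDAng d}

/-! ### Mod 2 homology of the map -/

variable (M) in
abbrev Vertex := Quotient (sameCycleSetoid M.σ)

variable (M) in
abbrev Edge := Quotient (sameCycleSetoid M.θ)

variable (M) in
abbrev Face := Quotient (sameCycleSetoid (M.σ * M.θ))

variable (M) in
def vertex (a : M.D) : M.Vertex := Quotient.mk _ a

variable (M) in
def edge (a : M.D) : M.Edge := Quotient.mk _ a

variable (M) in
def face (a : M.D) : M.Face := Quotient.mk _ a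

theorem vertex_surjective : Function.Surjective M.vertex := Quotient.exists_rep

theorem edge_surjective : Function.Surjective M.edge := Quotient.exists_rep

theorem face_surjective : Function.Surjective M.face := Quotient.exists_rep

theorem vertex_eq_iff {a b : M.D} : M.vertex a = M.vertex b ↔ M.σ.SameCycle a b :=
  Quotient.eq

@[simp]
theorem θ_θ (a : M.D) : M.θ (M.θ a) = a := M.θ_invol a

@[simp]
theorem vertex_σ (a : M.D) : M.vertex (M.σ a) = M.vertex a :=
  Quotient.sound ⟨-1, by simp⟩

@[simp]
theorem vertex_σ_symm (a : M.D) : M.vertex (M.σ.symm a) = M.vertex a := by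
  rw [← vertex_σ, Equiv.apply_symm_apply]

@[simp]
theorem vertex_iterate_σ (n : ℕ) (a : M.D) : M.vertex ((⇑M.σ)^[n] a) = M.vertex a := by
  induction n with
  | zero => rfl
  | succ n ih => rw [Function.iterate_succ_apply', vertex_σ, ih]

@[simp]
theorem edge_θ (a : M.D) : M.edge (M.θ a) = M.edge a :=
  Quotient.sound ⟨1, by simp⟩

theorem face_θ (a : M.D) : M.face (M.θ a) = M.face (M.σ a) :=
  Quotient.sound ⟨1, by simp⟩

theorem face_outer [NeZero d] (r : ZMod d) : M.face (M.outer r) = M.face (M.outer 0) := by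
  have key : ∀ n : ℕ, (⇑(M.σ * M.θ))^[n] (M.outer 0) = M.outer n := fun n => by
    induction n with
    | zero => simp
    | succ n ih => rw [Function.iterate_succ_apply', ih, M.outer_face, Nat.cast_succ]
  refine (Quotient.sound (show (M.σ * M.θ).SameCycle _ _ from ⟨(r.val : ℤ), ?_⟩)).symm
  rw [zpow_natCast, ← Equiv.Perm.iterate_eq_pow, key, ZMod.natCast_zmod_val]

theorem sameCycle_θ_iff {a b : M.D} : M.θ.SameCycle a b ↔ b = a ∨ b = M.θ a := by
  have hsq : M.θ ^ (2 : ℤ) = 1 := by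
    rw [zpow_two]; ext x; simp [Equiv.Perm.mul_apply]
  constructor
  · rintro ⟨z, rfl⟩
    have hz : M.θ ^ z = M.θ ^ (z % 2) := by
      conv_lhs => rw [← Int.mul_ediv_add_emod z 2]
      rw [zpow_add, zpow_mul, hsq, one_zpow, one_mul]
    rcases Int.emod_two_eq z with h | h <;> simp [hz, h]
  · rintro (rfl | rfl)
    · exact Equiv.Perm.SameCycle.refl _ _
    · exact ⟨1, by simp⟩

theorem edge_eq_iff {a b : M.D} : M.edge a = M.edge b ↔ a = b ∨ a = M.θ b := by
  rw [edge, edge, Quotient.eq]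
  change M.θ.SameCycle a b ↔ _
  rw [sameCycle_θ_iff]
  constructor <;> rintro (rfl | rfl) <;> simp

theorem filter_edge_eq (a : M.D) :
    Finset.univ.filter (fun x => M.edge x = M.edge a) = {a, M.θ a} := by
  ext x
  simp [edge_eq_iff]

theorem sum_filter_edge_eq {β : Type*} [AddCommMonoid β] (f : M.D → β) (a : M.D) :
    ∑ x ∈ Finset.univ.filter (fun x => M.edge x = M.edge a), f x = f a + f (M.θ a) := by
  rw [filter_edge_eq, Finset.sum_pair (M.θ_ne a).symm]

variable (M) in
/-- The boundary map `C₂ → C₁` of the cellular chain complex of the map, over `𝔽₂`. -/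
def faceBoundary : (M.Face → ZMod 2) →ₗ[ZMod 2] (M.Edge → ZMod 2) where
  toFun g e := ∑ a ∈ Finset.univ.filter (fun a => M.edge a = e), g (M.face a)
  map_add' f g := by funext e; simp [Finset.sum_add_distrib]
  map_smul' c f := by funext e; simp [Finset.mul_sum]

variable (M) in
/-- The boundary map `C₁ → C₀`. -/
def edgeBoundary : (M.Edge → ZMod 2) →ₗ[ZMod 2] (M.Vertex → ZMod 2) where
  toFun f v := ∑ a ∈ Finset.univ.filter (fun a => M.vertex a = v), f (M.edge a)
  map_add' f g := by funext v; simp [Finset.sum_add_distrib]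
  map_smul' c f := by funext v; simp [Finset.mul_sum]

variable (M) in
def augmentation : (M.Vertex → ZMod 2) →ₗ[ZMod 2] ZMod 2 where
  toFun h := ∑ v, h v
  map_add' f g := by simp [Finset.sum_add_distrib]
  map_smul' c f := by simp [Finset.mul_sum]

theorem faceBoundary_edge (g : M.Face → ZMod 2) (a : M.D) :
    M.faceBoundary g (M.edge a) = g (M.face a) + g (M.face (M.θ a)) :=
  sum_filter_edge_eq (fun x => g (M.face x)) a

theorem edgeBoundary_apply (f : M.Edge → ZMod 2) (v : M.Vertex) :
    M.edgeBoundary f v = ∑ a ∈ Finset.univ.filter (fun a => M.vertex a = v), f (M.edge a) :=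
  rfl

theorem edgeBoundary_faceBoundary (g : M.Face → ZMod 2) :
    M.edgeBoundary (M.faceBoundary g) = 0 := by
  funext v
  simp only [edgeBoundary_apply, faceBoundary_edge, Finset.sum_add_distrib, face_θ,
    Pi.zero_apply]
  -- `σ` permutes the darts at `v`, so both sums agree
  have hσ : ∑ a ∈ Finset.univ.filter (fun a => M.vertex a = v), g (M.face (M.σ a))
      = ∑ a ∈ Finset.univ.filter (fun a => M.vertex a = v), g (M.face a) :=
    Finset.sum_nbij' (fun a => M.σ a) (fun a => M.σ⁻¹ a) (by simp)
      (fun a ha => by simpa using ha) (by simp) (by simp) (fun _ _ => rfl)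
  rw [hσ, CharTwo.add_self_eq_zero]

theorem faceBoundary_const (c : ZMod 2) : M.faceBoundary (fun _ => c) = 0 := by
  funext e
  obtain ⟨a, rfl⟩ := edge_surjective e
  exact (faceBoundary_edge _ a).trans (CharTwo.add_self_eq_zero c)

theorem augmentation_edgeBoundary (f : M.Edge → ZMod 2) :
    M.augmentation (M.edgeBoundary f) = 0 := by
  change ∑ v, ∑ a ∈ _, _ = _
  rw [Finset.sum_fiberwise Finset.univ M.vertex (fun a => f (M.edge a)),
    ← Finset.sum_fiberwise Finset.univ M.edge (fun a => f (M.edge a))]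
  refine Finset.sum_eq_zero fun e _ => ?_
  obtain ⟨a, rfl⟩ := edge_surjective e
  rw [sum_filter_edge_eq (fun x => f (M.edge x)) a, edge_θ, CharTwo.add_self_eq_zero]

theorem eq_of_faceBoundary_eq_zero {g : M.Face → ZMod 2} (hg : M.faceBoundary g = 0)
    (a b : M.D) : g (M.face a) = g (M.face b) := by
  have hθ : ∀ x, g (M.face x) = g (M.face (M.θ x)) := fun x => by
    have h := congrFun hg (M.edge x)
    rw [faceBoundary_edge, Pi.zero_apply] at h
    exact CharTwo.add_eq_zero.mp h
  induction M.connected a b with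
  | refl => rfl
  | tail _ hstep ih =>
    rcases hstep with rfl | rfl
    · rw [ih, hθ, face_θ]
    · rw [ih, hθ]

theorem edgeBoundary_single_edge (a : M.D) :
    M.edgeBoundary (Pi.single (M.edge a) 1) =
      Pi.single (M.vertex a) 1 + Pi.single (M.vertex (M.θ a)) 1 := by
  funext v
  have h := sum_filter_edge_eq (fun x => if M.vertex x = v then (1 : ZMod 2) else 0) a
  rw [Finset.sum_filter] at h
  rw [edgeBoundary_apply, Finset.sum_filter]
  simp only [Pi.add_apply, Pi.single_apply, eq_comm (b := v)] at h ⊢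
  rw [← h]
  exact Finset.sum_congr rfl fun x _ => by split_ifs <;> rfl

theorem single_add_single_mem_range_edgeBoundary (a b : M.D) :
    (Pi.single (M.vertex a) 1 + Pi.single (M.vertex b) 1 : M.Vertex → ZMod 2) ∈
      LinearMap.range M.edgeBoundary := by
  induction M.connected a b with
  | refl =>
    convert Submodule.zero_mem _
    funext w
    exact CharTwo.add_self_eq_zero _
  | @tail x y _ hstep ih =>
    rcases hstep with rfl | rfl
    · rwa [vertex_σ]
    · have hx : (Pi.single (M.vertex x) 1 + Pi.single (M.vertex (M.θ x)) 1 :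
          M.Vertex → ZMod 2) ∈ LinearMap.range M.edgeBoundary := ⟨_, edgeBoundary_single_edge x⟩
      convert Submodule.add_mem _ ih hx using 1
      funext w
      simp only [Pi.add_apply]
      grind

theorem range_edgeBoundary : LinearMap.range M.edgeBoundary = LinearMap.ker M.augmentation := by
  refine le_antisymm ?_ fun h hh => ?_
  · rintro _ ⟨f, rfl⟩
    exact augmentation_edgeBoundary f
  · obtain ⟨a₀⟩ := M.nonemptyD
    have hsum : ∑ v, h v = 0 := hh
    have hrep : h = ∑ v, h v • (Pi.single v 1 + Pi.single (M.vertex a₀) 1) := by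
      funext w
      simp [Finset.sum_apply, Pi.single_apply, Finset.sum_add_distrib, hsum]
    rw [hrep]
    refine Submodule.sum_mem _ fun v _ => Submodule.smul_mem _ _ ?_
    obtain ⟨a, rfl⟩ := vertex_surjective v
    exact single_add_single_mem_range_edgeBoundary a a₀

theorem ker_faceBoundary :
    LinearMap.ker M.faceBoundary = Submodule.span (ZMod 2) {fun _ => 1} := by
  refine le_antisymm (fun g hg => ?_) ?_
  · obtain ⟨a₀⟩ := M.nonemptyD
    refine Submodule.mem_span_singleton.mpr ⟨g (M.face a₀), funext fun f => ?_⟩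
    obtain ⟨a, rfl⟩ := face_surjective f
    simp [eq_of_faceBoundary_eq_zero hg a a₀]
  · rw [Submodule.span_le, Set.singleton_subset_iff]
    exact faceBoundary_const 1

/-- `H₁ = 0` for the sphere, by a dimension count with Euler's relation. -/
theorem range_faceBoundary : LinearMap.range M.faceBoundary = LinearMap.ker M.edgeBoundary := by
  obtain ⟨a₀⟩ := M.nonemptyD
  have heuler : Fintype.card M.Vertex + Fintype.card M.Face = Fintype.card M.Edge + 2 := by
    simpa only [Nat.card_eq_fintype_card] using M.euler
  have hE := M.edgeBoundary.finrank_range_add_finrank_ker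
  have hF := M.faceBoundary.finrank_range_add_finrank_ker
  have hV := M.augmentation.finrank_range_add_finrank_ker
  have haug : LinearMap.range M.augmentation = ⊤ :=
    LinearMap.range_eq_top.mpr fun c =>
      ⟨Pi.single (M.vertex a₀) c, by simp [augmentation]⟩
  have hker : Module.finrank (ZMod 2) (LinearMap.ker M.faceBoundary) = 1 := by
    rw [ker_faceBoundary]
    exact finrank_span_singleton fun h => by simpa using congrFun h (M.face a₀)
  rw [haug, finrank_top, Module.finrank_self, ← range_edgeBoundary] at hV
  rw [hker] at hF
  simp only [Module.finrank_fintype_fun_eq_card] at hE hF hV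
  refine Submodule.eq_of_le_of_finrank_le ?_ (by omega)
  rintro _ ⟨g, rfl⟩
  exact edgeBoundary_faceBoundary g

theorem sub_eq_sub_of_faceBoundary_eq {S T : M.Face → ZMod 2}
    (h : M.faceBoundary T = M.faceBoundary S) (a b : M.D) :
    T (M.face a) - S (M.face a) = T (M.face b) - S (M.face b) :=
  eq_of_faceBoundary_eq_zero (g := T - S) (by rw [map_sub, h, sub_self]) a b

variable {Col : M.D → Finset (ZMod d)}

/-! ### Colored walks and cycles -/

theorem extVert_iff_of_vertex_eq {a b : M.D} (h : M.vertex a = M.vertex b) :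
    M.ExtVert a ↔ M.ExtVert b :=
  exists_congr fun _ => ⟨(vertex_eq_iff.mp h).symm.trans, (vertex_eq_iff.mp h).trans⟩

variable (Col) in
/-- The arc of color `j` leaving the head of `y` (`y` itself if there is none). -/
def nextArc (j : ZMod d) (y : M.D) : M.D :=
  if h : ∃ b, M.σ.SameCycle (M.θ y) b ∧ j ∈ Col b then h.choose else y

variable (Col) in
def arcWalk (j : ZMod d) (a : M.D) (k : ℕ) : M.D := (nextArc Col j)^[k] a

theorem arcWalk_succ (j : ZMod d) (a : M.D) (k : ℕ) :
    arcWalk Col j a (k + 1) = nextArc Col j (arcWalk Col j a k) :=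
  Function.iterate_succ_apply' _ _ _

variable (Col) in
structure IsColoredWalk (i : ZMod d) (c : ℕ → M.D) : Prop where
  mem_col : ∀ k, i ∈ Col (c k)
  sameCycle : ∀ k, M.σ.SameCycle (M.θ (c k)) (c (k + 1))

variable (Col) in
structure IsColoredCycle (i : ZMod d) (c : ℕ → M.D) : Prop extends IsColoredWalk Col i c where
  periodic : ∃ n, 0 < n ∧ Function.Periodic c n

theorem HasMonochromaticCycle.exists_isColoredCycle {i : ZMod d}
    (h : M.HasMonochromaticCycle Col i) : ∃ c, IsColoredCycle Col i c := by
  obtain ⟨n, c, hcol, hstep⟩ := h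
  exact ⟨fun k => c k, ⟨fun k => hcol _, fun k => by simpa using hstep k⟩, n + 1, n.succ_pos,
    fun k => by simp⟩

namespace IsSchnyderData

variable (hCol : M.IsSchnyderData Col)
include hCol

theorem not_extVert {i : ZMod d} {a : M.D} (ha : i ∈ Col a) : ¬ M.ExtVert a :=
  fun h => by simp [hCol.root_out a h] at ha

theorem notMem_θ {i : ZMod d} {a : M.D} (ha : i ∈ Col a) : i ∉ Col (M.θ a) :=
  Finset.disjoint_left.mp (hCol.disj a) ha

theorem eq_of_vertex_eq {j : ZMod d} {a b : M.D} (h : M.vertex a = M.vertex b)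
    (ha : j ∈ Col a) (hb : j ∈ Col b) : a = b :=
  (hCol.out_unique a (hCol.not_extVert ha) j).unique ⟨.refl _ _, ha⟩ ⟨vertex_eq_iff.mp h, hb⟩

theorem nextArc_spec (j : ZMod d) {y : M.D} (hy : ¬ M.ExtVert (M.θ y)) :
    M.σ.SameCycle (M.θ y) (nextArc Col j y) ∧ j ∈ Col (nextArc Col j y) := by
  have h : ∃ b, M.σ.SameCycle (M.θ y) b ∧ j ∈ Col b :=
    (hCol.out_unique _ hy j).exists
  rw [nextArc, dif_pos h]
  exact h.choose_spec

theorem mem_col_arcWalk {j : ZMod d} {a : M.D} (ha : j ∈ Col a) {n : ℕ}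
    (hint : ∀ k < n, ¬ M.ExtVert (M.θ (arcWalk Col j a k))) : j ∈ Col (arcWalk Col j a n) := by
  induction n with
  | zero => exact ha
  | succ n ih =>
    rw [arcWalk_succ]
    exact (hCol.nextArc_spec j (hint n n.lt_succ_self)).2

theorem isColoredWalk_arcWalk {j : ZMod d} {a : M.D} (ha : j ∈ Col a)
    (hint : ∀ k, ¬ M.ExtVert (M.θ (arcWalk Col j a k))) :
    IsColoredWalk Col j (arcWalk Col j a) where
  mem_col _ := hCol.mem_col_arcWalk ha fun k _ => hint k
  sameCycle k := by
    rw [arcWalk_succ]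
    exact (hCol.nextArc_spec j (hint k)).1

end IsSchnyderData

namespace IsColoredWalk

variable (hCol : M.IsSchnyderData Col) {i : ZMod d} {c : ℕ → M.D}
include hCol

theorem not_extVert_θ (hc : IsColoredWalk Col i c) (k : ℕ) : ¬ M.ExtVert (M.θ (c k)) := by
  rw [extVert_iff_of_vertex_eq (vertex_eq_iff.mpr (hc.sameCycle k))]
  exact hCol.not_extVert (hc.mem_col (k + 1))

theorem add_eq_of_eq {c' : ℕ → M.D} (hc : IsColoredWalk Col i c) (hc' : IsColoredWalk Col i c')
    {k k' : ℕ} (h : c k = c' k') (m : ℕ) : c (k + m) = c' (k' + m) := by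
  induction m with
  | zero => exact h
  | succ m ih =>
    refine hCol.eq_of_vertex_eq ?_ (hc.mem_col _) (hc'.mem_col _)
    rw [← add_assoc, ← add_assoc, ← vertex_eq_iff.mpr (hc.sameCycle _),
      ← vertex_eq_iff.mpr (hc'.sameCycle _), ih]

theorem exists_isColoredCycle (hc : IsColoredWalk Col i c) :
    ∃ u, IsColoredCycle Col i (fun k => c (u + k)) := by
  obtain ⟨u, u', hne, heq⟩ := Finite.exists_ne_map_eq_of_infinite c
  wlog hlt : u < u' generalizing u u'
  · exact this u' u hne.symm heq.symm (by omega)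
  refine ⟨u, ⟨fun k => hc.mem_col _, fun k => hc.sameCycle _⟩, u' - u, by omega, fun k => ?_⟩
  have := hc.add_eq_of_eq hCol hc heq.symm k
  simpa only [show u' + k = u + (k + (u' - u)) by omega] using this

end IsColoredWalk

/-! ### The interior of a colored cycle -/

def cycleEdges (c : ℕ → M.D) : Set M.Edge := Set.range (M.edge ∘ c)

def edgeIndicator (c : ℕ → M.D) : M.Edge → ZMod 2 := (cycleEdges c).indicator 1

theorem edge_notMem_cycleEdges {i : ZMod d} {c : ℕ → M.D} (hc : IsColoredWalk Col i c)
    {y : M.D} (hy : ∀ r, M.vertex y ≠ M.vertex (c r)) : M.edge y ∉ cycleEdges c := by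
  rintro ⟨r, hr⟩
  rcases edge_eq_iff.mp hr.symm with rfl | rfl
  · exact hy r rfl
  · exact hy (r + 1) (vertex_eq_iff.mpr (hc.sameCycle r))

/-- The set of faces enclosed by `c`, as a face function: the faces whose boundary is the
edge set of `c`, normalised to exclude the outer face. -/
def interior (c : ℕ → M.D) : M.Face → ZMod 2 :=
  if h : ∃ S, M.faceBoundary S = edgeIndicator c ∧ S (M.face (M.outer 0)) = 0 then h.choose
  else 0

def area (c : ℕ → M.D) : ℕ := (Finset.univ.filter fun f => interior c f = 1).card

/-- `±1`: the offset of the neighbouring color whose arcs leaving `c` enter its interior. -/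
def turn (c : ℕ → M.D) : ZMod d := if interior c (M.face (c 0)) = 0 then 1 else -1

theorem turn_mul_self (c : ℕ → M.D) : turn c * turn c = 1 := by
  unfold turn; split_ifs <;> simp

def InClosedInterior (c : ℕ → M.D) (a : M.D) : Prop :=
  M.edge a ∈ cycleEdges c ∨ (interior c (M.face a) = 1 ∧ interior c (M.face (M.θ a)) = 1)

namespace IsColoredCycle

variable (hCol : M.IsSchnyderData Col) {i j : ZMod d} {c c' : ℕ → M.D}

theorem exists_eq_succ (hc : IsColoredCycle Col i c) (r : ℕ) : ∃ t, c r = c (t + 1) := by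
  obtain ⟨n, hn, hper⟩ := hc.periodic
  exact ⟨r + n - 1, by rw [show r + n - 1 + 1 = r + n by omega, hper]⟩

include hCol

theorem ne_θ (hc : IsColoredCycle Col i c) (t t' : ℕ) : c t ≠ M.θ (c t') := fun h =>
  hCol.notMem_θ (hc.mem_col t') (h ▸ hc.mem_col t)

theorem eq_of_succ_eq (hc : IsColoredCycle Col i c) {r t : ℕ} (h : c (r + 1) = c (t + 1)) :
    c r = c t := by
  obtain ⟨n, hn, hper⟩ := hc.periodic
  have := hc.add_eq_of_eq hCol hc.toIsColoredWalk h (n - 1)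
  rwa [show r + 1 + (n - 1) = r + n by omega, show t + 1 + (n - 1) = t + n by omega, hper,
    hper] at this

theorem edge_mem_cycleEdges_iff (hc : IsColoredCycle Col i c) (t : ℕ) {y : M.D}
    (hy : M.vertex y = M.vertex (c (t + 1))) :
    M.edge y ∈ cycleEdges c ↔ y = c (t + 1) ∨ y = M.θ (c t) := by
  refine ⟨fun ⟨r, hr⟩ => ?_, ?_⟩
  · rcases edge_eq_iff.mp hr.symm with rfl | rfl
    · exact Or.inl (hCol.eq_of_vertex_eq hy (hc.mem_col r) (hc.mem_col _))
    · refine Or.inr (congrArg M.θ (hc.eq_of_succ_eq hCol ?_))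
      refine hCol.eq_of_vertex_eq ?_ (hc.mem_col _) (hc.mem_col _)
      rw [← hy, vertex_eq_iff.mpr (hc.sameCycle r)]
  · rintro (rfl | rfl)
    · exact ⟨t + 1, rfl⟩
    · exact ⟨t, (edge_θ _).symm⟩

theorem edgeBoundary_cycle_vertex (hc : IsColoredCycle Col i c) (t : ℕ) {F : M.Edge → ZMod 2}
    (hF : ∀ e ∉ cycleEdges c, F e = 0) :
    M.edgeBoundary F (M.vertex (c (t + 1))) = F (M.edge (c (t + 1))) + F (M.edge (c t)) := by
  rw [edgeBoundary_apply, ← edge_θ (c t)]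
  refine Finset.sum_eq_add _ _ (hc.ne_θ hCol _ _) (fun a ha hne => hF _ fun hmem => ?_)
    (fun h => absurd (by simp) h) (fun h => absurd ?_ h)
  · rw [Finset.mem_filter] at ha
    rcases (hc.edge_mem_cycleEdges_iff hCol t ha.2).mp hmem with h | h
    exacts [hne.1 h, hne.2 h]
  · simpa using vertex_eq_iff.mpr (hc.sameCycle t)

theorem edgeBoundary_edgeIndicator (hc : IsColoredCycle Col i c) :
    M.edgeBoundary (edgeIndicator c) = 0 := by
  have hF : ∀ e ∉ cycleEdges c, edgeIndicator c e = 0 := fun e he => Set.indicator_of_notMem he _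
  funext v
  by_cases hv : ∃ r, v = M.vertex (c r)
  · obtain ⟨r, rfl⟩ := hv
    obtain ⟨t, ht⟩ := hc.exists_eq_succ r
    rw [ht, hc.edgeBoundary_cycle_vertex hCol t hF, edgeIndicator,
      Set.indicator_of_mem (show M.edge (c (t + 1)) ∈ cycleEdges c from ⟨t + 1, rfl⟩),
      Set.indicator_of_mem (show M.edge (c t) ∈ cycleEdges c from ⟨t, rfl⟩)]
    rfl
  · refine Finset.sum_eq_zero fun a ha => hF _ (edge_notMem_cycleEdges hc.toIsColoredWalk ?_)
    rintro r hr
    exact hv ⟨r, ((Finset.mem_filter.mp ha).2).symm.trans hr⟩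

theorem interior_spec (hc : IsColoredCycle Col i c) :
    M.faceBoundary (interior c) = edgeIndicator c ∧ interior c (M.face (M.outer 0)) = 0 := by
  have hex : ∃ S, M.faceBoundary S = edgeIndicator c ∧ S (M.face (M.outer 0)) = 0 := by
    have hmem : edgeIndicator c ∈ LinearMap.range M.faceBoundary := by
      rw [range_faceBoundary]; exact hc.edgeBoundary_edgeIndicator hCol
    obtain ⟨S, hS⟩ := hmem
    refine ⟨S + fun _ => S (M.face (M.outer 0)), ?_, CharTwo.add_self_eq_zero _⟩
    rw [map_add, hS, faceBoundary_const, add_zero]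
  rw [interior, dif_pos hex]
  exact hex.choose_spec

theorem faceBoundary_interior (hc : IsColoredCycle Col i c) :
    M.faceBoundary (interior c) = edgeIndicator c :=
  (hc.interior_spec hCol).1

theorem interior_outer (hc : IsColoredCycle Col i c) :
    interior c (M.face (M.outer 0)) = 0 :=
  (hc.interior_spec hCol).2

theorem interior_face_θ (hc : IsColoredCycle Col i c) (a : M.D) :
    interior c (M.face (M.θ a)) = interior c (M.face a) + edgeIndicator c (M.edge a) := by
  rw [← hc.faceBoundary_interior hCol, faceBoundary_edge]
  grind

theorem interior_face_σ (hc : IsColoredCycle Col i c) (a : M.D) :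
    interior c (M.face (M.σ a)) = interior c (M.face a) + edgeIndicator c (M.edge a) := by
  rw [← face_θ, hc.interior_face_θ hCol]

theorem interior_face_eq_of_vertex_eq (hc : IsColoredCycle Col i c) {y z : M.D}
    (hyz : M.vertex y = M.vertex z) (hz : ∀ r, M.vertex z ≠ M.vertex (c r)) :
    interior c (M.face y) = interior c (M.face z) := by
  obtain ⟨n, hn⟩ := (vertex_eq_iff.mp hyz).exists_nat_pow_eq
  rw [← hn, ← Equiv.Perm.iterate_eq_pow]
  clear hn
  induction n with
  | zero => rfl
  | succ n ih =>
    have hnot : M.edge ((⇑M.σ)^[n] y) ∉ cycleEdges c :=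
      edge_notMem_cycleEdges hc.toIsColoredWalk fun r => by
        rw [vertex_iterate_σ, hyz]; exact hz r
    rw [Function.iterate_succ_apply', hc.interior_face_σ hCol, edgeIndicator,
      Set.indicator_of_notMem hnot, add_zero, ih]

theorem interior_face_eq_zero_of_extVert [NeZero d] (hc : IsColoredCycle Col i c) {a : M.D}
    (ha : M.ExtVert a) : interior c (M.face a) = 0 := by
  obtain ⟨r, hr⟩ := ha
  rw [hc.interior_face_eq_of_vertex_eq hCol (vertex_eq_iff.mpr hr), face_outer,
    hc.interior_outer hCol]
  intro k hk
  exact hCol.not_extVert (hc.mem_col k)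
    ((extVert_iff_of_vertex_eq hk).mp ⟨r, Equiv.Perm.SameCycle.refl _ _⟩)

theorem faceBoundary_eq_smul_edgeIndicator (hc : IsColoredCycle Col i c) {T : M.Face → ZMod 2}
    (hT : ∀ e ∉ cycleEdges c, M.faceBoundary T e = 0) :
    M.faceBoundary T = M.faceBoundary T (M.edge (c 0)) • edgeIndicator c := by
  -- parity at the vertices of `c` forces equal values on consecutive edges of `c`
  have hconst (t : ℕ) : M.faceBoundary T (M.edge (c t)) = M.faceBoundary T (M.edge (c 0)) := by
    induction t with
    | zero => rfl
    | succ t ih =>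
      have h := congrFun (edgeBoundary_faceBoundary T) (M.vertex (c (t + 1)))
      rw [hc.edgeBoundary_cycle_vertex hCol t hT, Pi.zero_apply] at h
      rw [← ih]
      exact CharTwo.add_eq_zero.mp h
  funext e
  by_cases he : e ∈ cycleEdges c
  · obtain ⟨t, rfl⟩ := he
    simp [edgeIndicator, Set.indicator_of_mem (show M.edge (c t) ∈ cycleEdges c from ⟨t, rfl⟩),
      hconst t]
  · simp [edgeIndicator, Set.indicator_of_notMem he, hT e he]

/-- A weak Jordan curve theorem: the boundary of `R` lies on `c`, hence is empty or all of `c`,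
so `R` is the set of all faces or the exterior of `c`. -/
theorem face_outer_mem (hc : IsColoredCycle Col i c) {R : Set M.Face}
    (hR : ∀ a, M.edge a ∉ cycleEdges c → M.face a ∈ R → M.face (M.θ a) ∈ R) {a₀ : M.D}
    (ha₀ : M.face a₀ ∈ R) (hout : interior c (M.face a₀) = 0) : M.face (M.outer 0) ∈ R := by
  set T : M.Face → ZMod 2 := R.indicator 1
  have hT : ∀ e ∉ cycleEdges c, M.faceBoundary T e = 0 := by
    intro e he
    obtain ⟨a, rfl⟩ := edge_surjective e
    have hiff : M.face a ∈ R ↔ M.face (M.θ a) ∈ R :=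
      ⟨hR a he, fun h => by simpa using hR (M.θ a) (by rwa [edge_θ]) h⟩
    rw [faceBoundary_edge]
    by_cases ha : M.face a ∈ R
    · simp [T, Set.indicator_of_mem ha, Set.indicator_of_mem (hiff.mp ha), CharTwo.add_self_eq_zero]
    · simp [T, Set.indicator_of_notMem ha, Set.indicator_of_notMem (hiff.not.mp ha)]
  set x := M.faceBoundary T (M.edge (c 0))
  have hbd : M.faceBoundary T = M.faceBoundary (x • interior c) := by
    rw [map_smul, hc.faceBoundary_interior hCol, ← hc.faceBoundary_eq_smul_edgeIndicator hCol hT]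
  have h := sub_eq_sub_of_faceBoundary_eq hbd a₀ (M.outer 0)
  simp only [Pi.smul_apply, hout, hc.interior_outer hCol, smul_zero, sub_zero, T,
    Set.indicator_of_mem ha₀] at h
  by_contra hno
  rw [Set.indicator_of_notMem hno] at h
  exact one_ne_zero h

theorem interior_eq_one_of_inClosedInterior (hc : IsColoredCycle Col i c)
    (hc' : IsColoredCycle Col j c') (hin : ∀ k, InClosedInterior c (c' k)) {f : M.Face}
    (hf : interior c' f = 1) : interior c f = 1 := by
  obtain ⟨a₀, rfl⟩ := face_surjective f
  refine Fin.eq_one_of_ne_zero _ fun h0 => ?_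
  -- faces outside `c` but inside `c'` can only be left through `c`
  set R : Set M.Face := {f | interior c f = 0 ∧ interior c' f = 1}
  have hR (a : M.D) (ha : M.edge a ∉ cycleEdges c) (haR : M.face a ∈ R) : M.face (M.θ a) ∈ R := by
    have ha' : M.edge a ∉ cycleEdges c' := by
      rintro ⟨k, hk⟩
      rcases hin k with hmem | ⟨h1, h1'⟩
      · exact ha (hk ▸ hmem)
      · rcases edge_eq_iff.mp hk.symm with rfl | rfl
        · exact zero_ne_one (haR.1.symm.trans h1)
        · exact zero_ne_one (haR.1.symm.trans h1')
    simp only [R, Set.mem_ofPred_eq, hc.interior_face_θ hCol, hc'.interior_face_θ hCol,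
      edgeIndicator, Set.indicator_of_notMem ha, Set.indicator_of_notMem ha', add_zero]
    exact haR
  have hout := hc.face_outer_mem hCol hR (a₀ := a₀) ⟨h0, hf⟩ h0
  exact zero_ne_one (hc'.interior_outer hCol ▸ hout.2)

theorem cycleEdges_subset_of_area_le (hc : IsColoredCycle Col i c)
    (hc' : IsColoredCycle Col j c') (hin : ∀ k, InClosedInterior c (c' k))
    (harea : area c ≤ area c') : cycleEdges c ⊆ cycleEdges c' := by
  have hsub : (Finset.univ.filter fun f => interior c' f = 1) ⊆
      Finset.univ.filter fun f => interior c f = 1 := fun f hf => by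
    simp only [Finset.mem_filter, Finset.mem_univ, true_and] at hf ⊢
    exact hc.interior_eq_one_of_inClosedInterior hCol hc' hin hf
  have heq := Finset.eq_of_subset_of_card_le hsub harea
  have hint : interior c' = interior c := funext fun f => by
    have hf := Finset.ext_iff.mp heq f
    simp only [Finset.mem_filter, Finset.mem_univ, true_and] at hf
    revert hf
    generalize interior c' f = x
    generalize interior c f = y
    decide +revert
  intro e he
  have h1 : edgeIndicator c' e = 1 := by
    rw [← hc'.faceBoundary_interior hCol, hint, hc.faceBoundary_interior hCol, edgeIndicator,
      Set.indicator_of_mem he, Pi.one_apply]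
  by_contra hne
  rw [edgeIndicator, Set.indicator_of_notMem hne] at h1
  exact zero_ne_one h1

/-! ### The colors around a vertex of a colored cycle -/

section HeadVertex

/- Positions around the head of `c t`: `b` is a reference arc there, `n` the degree, and `c (t + 1)`
and the reversal of `c t` sit at positions `P` and `m`. -/
variable {t n P m : ℕ} {b : M.D} (hn : Function.minimalPeriod M.σ b = n) (hP : P < n)
  (hm : m < n) (hbP : (⇑M.σ)^[P] b = c (t + 1)) (hbm : (⇑M.σ)^[m] b = M.θ (c t))
include hn hP hm hbP hbm

theorem edge_iterate_σ_mem_cycleEdges_iff (hc : IsColoredCycle Col i c) (u : ℕ) :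
    M.edge ((⇑M.σ)^[u] b) ∈ cycleEdges c ↔ u % n = P ∨ u % n = m := by
  have hv : M.vertex ((⇑M.σ)^[u] b) = M.vertex (c (t + 1)) := by simp [← hbP]
  have hlt : u % n < Function.minimalPeriod M.σ b := hn ▸ Nat.mod_lt _ (by omega)
  rw [hc.edge_mem_cycleEdges_iff hCol t hv, ← hbP, ← hbm, ← hn,
    ← Function.iterate_mod_minimalPeriod_eq, hn,
    Function.iterate_eq_iterate_iff_of_lt_minimalPeriod hlt (hn ▸ hP),
    Function.iterate_eq_iterate_iff_of_lt_minimalPeriod hlt (hn ▸ hm)]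

theorem interior_iterate_σ (hc : IsColoredCycle Col i c) {u : ℕ} (hu : u < n) :
    interior c (M.face ((⇑M.σ)^[u] b)) = interior c (M.face (c (t + 1))) +
      if 1 ≤ cycDist n P u ∧ cycDist n P u ≤ cycDist n P m then 1 else 0 := by
  have hPm : P ≠ m := by
    rintro rfl
    exact hc.ne_θ hCol (t + 1) t (hbP.symm.trans hbm)
  have hflip (r : ℕ) : interior c (M.face ((⇑M.σ)^[r + 1] b)) =
      interior c (M.face ((⇑M.σ)^[r] b)) + if r % n = P ∨ r % n = m then 1 else 0 := by
    rw [Function.iterate_succ_apply', hc.interior_face_σ hCol, edgeIndicator, Set.indicator_apply,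
      hc.edge_iterate_σ_mem_cycleEdges_iff hCol hn hP hm hbP hbm]
    split_ifs <;> rfl
  have h := parity_between_cycDist (f := fun r => interior c (M.face ((⇑M.σ)^[r] b))) hP hm hPm
    hflip (cycDist n P u) (cycDist_lt _ _ (by omega))
  rwa [← hn, ← Function.iterate_mod_minimalPeriod_eq, hn, add_cycDist_mod hP hu, hbP] at h

end HeadVertex

section

variable (hd : 3 ≤ d)
include hd

/-- Read off from the clockwise condition at the head of `c t`: the incoming arc of color `i`
lies between the outgoing arcs of colors `i + 1` and `i - 1`, so the cycle separates these two
arcs, unless one of them continues the cycle. -/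
theorem interior_at_head (hc : IsColoredCycle Col i c) (t : ℕ) :
    interior c (M.face (c (t + 1))) = interior c (M.face (c t)) ∧
    ∀ w, M.vertex w = M.vertex (c (t + 1)) → w ≠ c (t + 1) →
      (i + 1 ∈ Col w → M.edge w ∉ cycleEdges c ∧
        interior c (M.face w) = interior c (M.face (c (t + 1))) + 1) ∧
      (i - 1 ∈ Col w → M.edge w ∉ cycleEdges c ∧
        interior c (M.face w) = interior c (M.face (c (t + 1)))) := by
  obtain ⟨b, p, hb, hplt, hmono, hiff, hbet⟩ :=
    hCol.cw (c (t + 1)) (hCol.not_extVert (hc.mem_col _))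
  set n := Function.minimalPeriod M.σ b with hn
  have hbm' : M.σ.SameCycle b (M.θ (c t)) := ((hc.sameCycle t).trans hb).symm
  obtain ⟨m, hm, hbm⟩ := hbm'.exists_iterate_lt_minimalPeriod
  have hpos (j : ZMod d) {w : M.D} (hw : M.vertex w = M.vertex (c (t + 1))) (hj : j ∈ Col w) :
      (⇑M.σ)^[p j] b = w :=
    ((hiff j w).mp ⟨vertex_eq_iff.mp ((vertex_eq_iff.mpr hb).symm.trans hw.symm), hj⟩).symm
  have hbP := hpos i rfl (hc.mem_col _)
  have hmem (u : ℕ) := hc.edge_iterate_σ_mem_cycleEdges_iff hCol hn.symm (hplt i) hm hbP hbm u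
  have hint {u : ℕ} (hu : u < n) := hc.interior_iterate_σ hCol hn.symm (hplt i) hm hbP hbm hu
  have hmid := hbet i _ hbm' (by simpa using hc.mem_col t) m hm hbm.symm
  obtain ⟨hle, hlt⟩ := cycDist_le_and_lt_of_cycBetween (hplt i) (hplt (i + 1)) (hplt (i - 1)) hm
    (ZMod.cyclicOrder_of_monotone hd p hmono i) hmid
  have hPm : p i ≠ m := fun h => hc.ne_θ hCol (t + 1) t (by rw [← hbP, ← hbm, h])
  have hΔ : 0 < cycDist n (p i) m :=
    Nat.pos_of_ne_zero ((cycDist_eq_zero_iff (hplt i) hm).not.mpr hPm)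
  refine ⟨?_, fun w hw hne => ⟨fun hj => ?_, fun hj => ?_⟩⟩
  · have h := hint hm
    rw [hbm, hc.interior_face_θ hCol, if_pos ⟨hΔ, le_rfl⟩, edgeIndicator,
      Set.indicator_of_mem (show M.edge (c t) ∈ cycleEdges c from ⟨t, rfl⟩)] at h
    exact (add_right_cancel h).symm
  · have hw' := hpos (i + 1) hw hj
    have hq : p (i + 1) ≠ p i := fun h => hne (by rw [← hw', h, hbP])
    have hqm : p (i + 1) ≠ m := fun h => by
      have := hmid.1
      rw [h, (cycDist_eq_zero_iff hm hm).mpr rfl] at this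
      exact this.false
    rw [← hw', hmem, Nat.mod_eq_of_lt (hplt _), hint (hplt _),
      if_pos ⟨Nat.pos_of_ne_zero ((cycDist_eq_zero_iff (hplt i) (hplt _)).not.mpr hq.symm), hle⟩]
    exact ⟨by tauto, rfl⟩
  · have hw' := hpos (i - 1) hw hj
    have hq : p (i - 1) ≠ p i := fun h => hne (by rw [← hw', h, hbP])
    have hqm : p (i - 1) ≠ m := fun h => by
      have := hmid.2
      rw [h] at this
      exact this.false
    have hq0 := (cycDist_eq_zero_iff (hplt i) (hplt (i - 1))).not.mpr hq.symm
    rw [← hw', hmem, Nat.mod_eq_of_lt (hplt _), hint (hplt _), if_neg (by omega), add_zero]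
    exact ⟨by tauto, rfl⟩

theorem interior_face_eq_interior_face_zero (hc : IsColoredCycle Col i c) (t : ℕ) :
    interior c (M.face (c t)) = interior c (M.face (c 0)) := by
  induction t with
  | zero => rfl
  | succ t ih => rw [(hc.interior_at_head hCol hd t).1, ih]

theorem interior_turn_arc (hc : IsColoredCycle Col i c) (t : ℕ) {w : M.D}
    (hw : M.vertex w = M.vertex (c (t + 1))) (hne : w ≠ c (t + 1)) (hj : i + turn c ∈ Col w) :
    M.edge w ∉ cycleEdges c ∧ interior c (M.face w) = 1 := by
  have hhead := (hc.interior_at_head hCol hd t).2 w hw hne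
  rw [hc.interior_face_eq_interior_face_zero hCol hd] at hhead
  unfold turn at hj
  split_ifs at hj with h0
  · rw [h0, zero_add] at hhead
    exact hhead.1 hj
  · rw [← sub_eq_add_neg] at hj
    obtain ⟨hnot, heq⟩ := hhead.2 hj
    exact ⟨hnot, heq.trans (Fin.eq_one_of_ne_zero _ h0)⟩

theorem inClosedInterior_of_vertex_eq (hc : IsColoredCycle Col i c) (t : ℕ) {w : M.D}
    (hw : M.vertex w = M.vertex (c (t + 1))) (hj : i + turn c ∈ Col w) :
    InClosedInterior c w := by
  by_cases hne : w = c (t + 1)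
  · exact Or.inl ⟨t + 1, hne ▸ rfl⟩
  obtain ⟨hnot, h1⟩ := hc.interior_turn_arc hCol hd t hw hne hj
  refine Or.inr ⟨h1, ?_⟩
  rw [hc.interior_face_θ hCol, h1, edgeIndicator, Set.indicator_of_notMem hnot, add_zero]

theorem not_extVert_θ_of_inClosedInterior (hc : IsColoredCycle Col i c) {a : M.D}
    (ha : InClosedInterior c a) : ¬ M.ExtVert (M.θ a) := by
  have : NeZero d := ⟨by omega⟩
  rcases ha with ⟨r, hr⟩ | ⟨_, h1⟩
  · rcases edge_eq_iff.mp hr.symm with rfl | rfl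
    · exact hc.not_extVert_θ hCol r
    · simpa using hCol.not_extVert (hc.mem_col r)
  · intro hext
    rw [hc.interior_face_eq_zero_of_extVert hCol hext] at h1
    exact zero_ne_one h1

theorem inClosedInterior_nextArc (hc : IsColoredCycle Col i c) {a : M.D}
    (ha : InClosedInterior c a) :
    InClosedInterior c (nextArc Col (i + turn c) a) := by
  set z := nextArc Col (i + turn c) a
  obtain ⟨hz, hzj⟩ :=
    hCol.nextArc_spec (i + turn c) (hc.not_extVert_θ_of_inClosedInterior hCol hd ha)
  by_cases hv : ∃ r, M.vertex z = M.vertex (c r)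
  · obtain ⟨r, hr⟩ := hv
    obtain ⟨t, ht⟩ := hc.exists_eq_succ r
    exact hc.inClosedInterior_of_vertex_eq hCol hd t (ht ▸ hr) hzj
  simp only [not_exists] at hv
  have hθa : interior c (M.face (M.θ a)) = 1 := by
    rcases ha with ⟨r, hr⟩ | ⟨_, h1⟩
    · rcases edge_eq_iff.mp hr.symm with rfl | rfl
      · exact (hv (r + 1) ((vertex_eq_iff.mpr hz).symm.trans
          (vertex_eq_iff.mpr (hc.sameCycle r)))).elim
      · exact (hv r (by simpa using (vertex_eq_iff.mpr hz).symm)).elim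
    · exact h1
  have hz1 : interior c (M.face z) = 1 :=
    (hc.interior_face_eq_of_vertex_eq hCol (vertex_eq_iff.mpr hz) hv).symm.trans hθa
  have hnot : M.edge z ∉ cycleEdges c := edge_notMem_cycleEdges hc.toIsColoredWalk hv
  refine Or.inr ⟨hz1, ?_⟩
  rw [hc.interior_face_θ hCol, hz1, edgeIndicator, Set.indicator_of_notMem hnot, add_zero]

theorem exists_isColoredCycle_inClosedInterior (hc : IsColoredCycle Col i c) :
    ∃ c', IsColoredCycle Col (i + turn c) c' ∧ ∀ k, InClosedInterior c (c' k) := by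
  set j := i + turn c
  obtain ⟨h0, h0j⟩ := hCol.nextArc_spec j (hc.not_extVert_θ hCol 0)
  set a := nextArc Col j (c 0)
  have hwalk (k : ℕ) : j ∈ Col (arcWalk Col j a k) ∧ InClosedInterior c (arcWalk Col j a k) := by
    induction k with
    | zero => exact ⟨h0j, hc.inClosedInterior_of_vertex_eq hCol hd 0 (vertex_eq_iff.mpr
        ((hc.sameCycle 0).symm.trans h0)).symm h0j⟩
    | succ k ih =>
      rw [arcWalk_succ]
      exact ⟨(hCol.nextArc_spec j (hc.not_extVert_θ_of_inClosedInterior hCol hd ih.2)).2,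
        hc.inClosedInterior_nextArc hCol hd ih.2⟩
  obtain ⟨u, hu⟩ := (hCol.isColoredWalk_arcWalk h0j fun k =>
    hc.not_extVert_θ_of_inClosedInterior hCol hd (hwalk k).2).exists_isColoredCycle hCol
  exact ⟨_, hu, fun k => (hwalk _).2⟩

theorem isColoredCycle_of_cycleEdges_subset (hc : IsColoredCycle Col i c)
    (hc' : IsColoredCycle Col (i + turn c) c') (hsub : cycleEdges c ⊆ cycleEdges c') :
    IsColoredCycle Col (i + turn c) c := by
  refine ⟨⟨fun t => ?_, hc.sameCycle⟩, hc.periodic⟩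
  obtain ⟨s, hs⟩ := hc.exists_eq_succ t
  obtain ⟨r, hr⟩ := hsub ⟨s + 1, rfl⟩
  rcases edge_eq_iff.mp hr with h | h
  · exact hs ▸ h ▸ hc'.mem_col r
  · have hv : M.vertex (c' r) = M.vertex (c (s + 1 + 1)) := by
      rw [h]; exact vertex_eq_iff.mpr (hc.sameCycle _)
    have hne : c' r ≠ c (s + 1 + 1) := fun h' => hc.ne_θ hCol _ _ (h'.symm.trans h)
    refine ((hc.interior_turn_arc hCol hd _ hv hne (hc'.mem_col r)).1 ?_).elim
    exact ⟨s + 1, by simp [h]⟩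

theorem add_turn_of_area_le (hc : IsColoredCycle Col i c)
    (hmin : ∀ j c', IsColoredCycle Col j c' → area c ≤ area c') :
    IsColoredCycle Col (i + turn c) c := by
  obtain ⟨c', hc', hin⟩ := hc.exists_isColoredCycle_inClosedInterior hCol hd
  exact hc.isColoredCycle_of_cycleEdges_subset hCol hd hc'
    (hc.cycleEdges_subset_of_area_le hCol hc' hin (hmin _ _ hc'))

end

end IsColoredCycle

namespace IsSchnyderData

variable (hCol : M.IsSchnyderData Col) (hd : 3 ≤ d)
include hCol hd

/-- A colored cycle of minimal area would also carry the colors `i + turn c, i + 2 turn c, …`,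
that is `d - 1` colors on one edge, which carries only `d - 2`. -/
theorem not_isColoredCycle (i : ZMod d) (c : ℕ → M.D) : ¬ IsColoredCycle Col i c := by
  intro hc
  have hex : ∃ n, ∃ j c', IsColoredCycle Col j c' ∧ area c' = n := ⟨_, i, c, hc, rfl⟩
  obtain ⟨j, c, hc, hmin⟩ : ∃ j c, IsColoredCycle Col j c ∧
      ∀ j' c', IsColoredCycle Col j' c' → area c ≤ area c' := by
    obtain ⟨j, c, hc, hn⟩ := Nat.find_spec hex
    exact ⟨j, c, hc, fun j' c' hc' => hn ▸ Nat.find_min' hex ⟨j', c', hc', rfl⟩⟩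
  have hall (r : ℕ) : IsColoredCycle Col (j + r * turn c) c := by
    induction r with
    | zero => simpa using hc
    | succ r ih => simpa [add_mul, add_assoc] using ih.add_turn_of_area_le hCol hd hmin
  have : NeZero d := ⟨by omega⟩
  have hinj : Set.InjOn (fun r : ℕ => j + r * turn c) (Finset.range (d - 1)) := by
    intro r hr r' hr' h
    have h' : (r : ZMod d) = r' := by
      simpa [mul_assoc, turn_mul_self] using congrArg (· * turn c) (add_left_cancel h)
    simp only [Finset.coe_range, Set.mem_Iio] at hr hr'
    simpa [ZMod.val_natCast, Nat.mod_eq_of_lt (show r < d by omega),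
      Nat.mod_eq_of_lt (show r' < d by omega)] using congrArg ZMod.val h'
  have hcard : d - 1 ≤ (Col (c 0)).card := by
    calc d - 1 = ((Finset.range (d - 1)).image fun r : ℕ => j + r * turn c).card := by
          rw [Finset.card_image_of_injOn hinj, Finset.card_range]
      _ ≤ _ := Finset.card_le_card (Finset.image_subset_iff.mpr fun r _ => (hall r).mem_col 0)
  have hext : ¬ M.ExtEdge (c 0) := fun h => by simpa [hCol.ext_edge _ h] using hc.mem_col 0
  have := hCol.edge_count _ hext
  omega

theorem exists_path_to_extVert {i : ZMod d} {a : M.D} (ha : i ∈ Col a) :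
    ∃ (n : ℕ) (c : Fin (n + 1) → M.D), c 0 = a ∧ (∀ k, i ∈ Col (c k)) ∧
      (∀ k : Fin n, M.σ.SameCycle (M.θ (c k.castSucc)) (c k.succ)) ∧
      M.ExtVert (M.θ (c (Fin.last n))) := by
  have hex : ∃ N, M.ExtVert (M.θ (arcWalk Col i a N)) := by
    by_contra h
    simp only [not_exists] at h
    obtain ⟨u, hu⟩ := (hCol.isColoredWalk_arcWalk ha h).exists_isColoredCycle hCol
    exact hCol.not_isColoredCycle hd _ _ hu
  have hint (k : ℕ) (hk : k < Nat.find hex) : ¬ M.ExtVert (M.θ (arcWalk Col i a k)) :=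
    Nat.find_min hex hk
  refine ⟨Nat.find hex, fun k => arcWalk Col i a k, rfl,
    fun k => hCol.mem_col_arcWalk ha fun m hm => hint m (by omega), fun k => ?_,
    Nat.find_spec hex⟩
  simp only [Fin.val_succ, Fin.val_castSucc, arcWalk_succ]
  exact (hCol.nextArc_spec i (hint k k.isLt)).1

end IsSchnyderData

end PlaneDAng

theorem stmt11_general (d : ℕ) (hd : 3 ≤ d) (M : PlaneDAng d)
    (Col : M.D → Finset (ZMod d)) (hCol : M.IsSchnyderData Col) :
    (∀ i : ZMod d, ¬ M.HasMonochromaticCycle Col i) ∧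
    (∀ (i : ZMod d) (a : M.D), i ∈ Col a →
      ∃ (n : ℕ) (c : Fin (n + 1) → M.D), c 0 = a ∧ (∀ k, i ∈ Col (c k)) ∧
        (∀ k : Fin n, M.σ.SameCycle (M.θ (c k.castSucc)) (c k.succ)) ∧
        M.ExtVert (M.θ (c (Fin.last n)))) := by
  refine ⟨fun i h => ?_, fun i a ha => hCol.exists_path_to_extVert hd ha⟩
  obtain ⟨c, hc⟩ := h.exists_isColoredCycle
  exact hCol.not_isColoredCycle hd i c hc

/-- In a Schnyder decomposition of a `d`-angulation of girth `d` (given by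
its defining local conditions), no colored subgraph `Fᵢ` contains a directed cycle;
equivalently, every monochromatic directed path starting at an internal vertex can be
prolonged to a directed path reaching an external vertex. -/
theorem stmt11 (d : ℕ) (hd : 3 ≤ d) (M : PlaneDAng d) (hg : M.HasGirth d)
    (Col : M.D → Finset (ZMod d)) (hCol : M.IsSchnyderData Col) :
    (∀ i : ZMod d, ¬ M.HasMonochromaticCycle Col i) ∧
    (∀ (i : ZMod d) (a : M.D), i ∈ Col a →
      ∃ (n : ℕ) (c : Fin (n + 1) → M.D), c 0 = a ∧ (∀ k, i ∈ Col (c k)) ∧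
        (∀ k : Fin n, M.σ.SameCycle (M.θ (c k.castSucc)) (c k.succ)) ∧
        M.ExtVert (M.θ (c (Fin.last n)))) :=
  stmt11_general d hd M Col hCol
end
end

section
/- The complemented dual of a spanning tree of a connected plane graph G is a spanning tree of the dual graph G*: the edges of G* dual to the edges of G not in a spanning tree T of G form a spanning tree of G*. -/
open scoped Classical

noncomputable section

/-- A connected plane map, encoded as a rotation system on darts: `σ` is the clockwise rotation
around vertices and `θ` the dart reversal.  Vertices are the `σ`-cycles, edges the `θ`-cycles,
faces the `σ * θ`-cycles; planarity is the Euler relation `V + F = E + 2`. -/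
structure PlaneMap where
  D : Type
  [finD : Fintype D]
  [decD : DecidableEq D]
  σ : Equiv.Perm D
  θ : Equiv.Perm D
  θ_invol : Function.Involutive ⇑θ
  θ_ne : ∀ a, θ a ≠ a
  nonemptyD : Nonempty D
  connected : ∀ a b : D, Relation.ReflTransGen (fun x y => y = σ x ∨ y = θ x) a b
  euler : Nat.card (Quotient (sameCycleSetoid σ)) + Nat.card (Quotient (sameCycleSetoid (σ * θ)))
        = Nat.card (Quotient (sameCycleSetoid θ)) + 2

attribute [instance] PlaneMap.finD PlaneMap.decD

namespace PlaneMap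

variable (M : PlaneMap)

/-- A simple cycle of length `ℓ` with respect to a "vertex" permutation `ρ` (take `ρ = M.σ` for
cycles of the map itself, and `ρ = M.σ * M.θ` for cycles of the dual map): a cyclic sequence of
darts, consecutive ones sharing a `ρ`-vertex, with pairwise distinct vertices and edges. -/
def IsCycleIn (ρ : Equiv.Perm M.D) (ℓ : ℕ) (c : ZMod ℓ → M.D) : Prop :=
  0 < ℓ ∧ (∀ i, ρ.SameCycle (M.θ (c i)) (c (i + 1))) ∧
    (∀ i j, ρ.SameCycle (c i) (c j) → i = j) ∧
    (∀ i j, c i = c j ∨ c i = M.θ (c j) → i = j)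

end PlaneMap

namespace PlaneMap

variable (M : PlaneMap)

/-- The subgraph given by the `θ`-closed dart set `S` is a spanning tree of the map:
it connects all darts (hence all vertices, moving freely around vertices and along the edges
of `S`), and it contains no simple cycle. -/
def IsSpanningTree (S : Set M.D) : Prop :=
  (∀ a b : M.D, Relation.ReflTransGen (fun x y => y = M.σ x ∨ (x ∈ S ∧ y = M.θ x)) a b) ∧
  (∀ (ℓ : ℕ) (c : ZMod ℓ → M.D), M.IsCycleIn M.σ ℓ c → ∃ i, c i ∉ S)

/-- The subgraph given by the `θ`-closed dart set `S` is a spanning tree of the **dual** map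
(whose vertices are the faces of `M`, i.e. the cycles of `σ * θ`, and whose edges are the duals
of the edges of `M`). -/
def IsDualSpanningTree (S : Set M.D) : Prop :=
  (∀ a b : M.D,
      Relation.ReflTransGen (fun x y => y = (M.σ * M.θ) x ∨ (x ∈ S ∧ y = M.θ x)) a b) ∧
  (∀ (ℓ : ℕ) (c : ZMod ℓ → M.D), M.IsCycleIn (M.σ * M.θ) ℓ c → ∃ i, c i ∉ S)

end PlaneMap

/-!
Dual connectivity holds on any surface. If the darts `P` reachable from `a` in the dual of `Sᶜ`
are not all darts, connectivity of the map gives an edge `w` with `w ∈ P`, `θ w ∉ P`, and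
`w ∈ S` since `P` only changes across edges of `S`. A parity count shows that `w` is not a
bridge of `S`, so `S` has a cycle through `w`.

Dual acyclicity is where planarity enters. Deleting an edge of a dual cycle lying in `Sᶜ` keeps
the dual connected; a connected submap with `k` edges has at most `k + 1` vertices, so
`V ≤ |S| / 2 + 1` and `F ≤ |Sᶜ| / 2`, whence `V + F ≤ E + 1`, contradicting Euler's
relation.
-/

theorem ZMod.val_add_one {m : ℕ} (i : ZMod (m + 1)) :
    (i + 1).val = if i.val = m then 0 else i.val + 1 := by
  have hi : i + 1 = ((i.val + 1 : ℕ) : ZMod (m + 1)) := by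
    rw [Nat.cast_succ, ZMod.natCast_zmod_val]
  have := ZMod.val_lt i
  split_ifs with h
  · rw [hi, h, ZMod.natCast_self, ZMod.val_zero]
  · rw [hi, ZMod.val_cast_of_lt (by omega)]

namespace PlaneMap

variable {M : PlaneMap} {ρ : Equiv.Perm M.D} {X S : Set M.D} {a b c : M.D}

variable (M) in
def IsEdgeSet (X : Set M.D) : Prop := ∀ a ∈ X, M.θ a ∈ X

theorem IsEdgeSet.compl (hX : M.IsEdgeSet X) : M.IsEdgeSet Xᶜ := fun a ha hθa =>
  ha (M.θ_invol a ▸ hX _ hθa)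

theorem IsEdgeSet.diff_pair (hX : M.IsEdgeSet X) (a : M.D) : M.IsEdgeSet (X \ {a, M.θ a}) := by
  rintro x ⟨hx, hxa⟩
  refine ⟨hX x hx, fun h => hxa ?_⟩
  rcases h with h | h
  · exact .inr (by rw [← h, M.θ_invol]; rfl)
  · exact .inl (M.θ.injective h)

theorem ncard_diff_pair_add_two (hX : M.IsEdgeSet X) (ha : a ∈ X) :
    (X \ {a, M.θ a}).ncard + 2 = X.ncard := by
  have hsub : {a, M.θ a} ⊆ X := Set.insert_subset ha (Set.singleton_subset_iff.mpr (hX a ha))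
  have hpair := Set.ncard_pair (M.θ_ne a).symm
  have := Set.ncard_le_ncard hsub
  rw [Set.ncard_sdiff hsub]
  omega

variable (M) in
def reach (ρ : Equiv.Perm M.D) (X : Set M.D) : M.D → M.D → Prop :=
  Relation.ReflTransGen fun x y => y = ρ x ∨ (x ∈ X ∧ y = M.θ x)

theorem reach_rotate (a : M.D) : M.reach ρ X a (ρ a) := .single (.inl rfl)

theorem reach_theta (ha : a ∈ X) : M.reach ρ X a (M.θ a) := .single (.inr ⟨ha, rfl⟩)

theorem reach_of_sameCycle (h : ρ.SameCycle a b) : M.reach ρ X a b := by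
  obtain ⟨n, rfl⟩ := h.exists_nat_pow_eq
  clear h
  induction n with
  | zero => exact .refl
  | succ n ih =>
    rw [pow_succ', Equiv.Perm.mul_apply]
    exact ih.tail (.inl rfl)

theorem reach_mono {Y : Set M.D} (hXY : X ⊆ Y) (h : M.reach ρ X a b) : M.reach ρ Y a b :=
  Relation.ReflTransGen.mono (fun _ _ => Or.imp_right (And.imp_left (@hXY _))) _ _ h

theorem reach_symm (hX : M.IsEdgeSet X) (h : M.reach ρ X a b) : M.reach ρ X b a := by
  induction h with
  | refl => exact .refl
  | tail _ hxy ih =>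
    refine .trans ?_ ih
    rcases hxy with rfl | ⟨hx, rfl⟩
    · exact reach_of_sameCycle (Equiv.Perm.sameCycle_apply_left.mpr (.refl _ _))
    · have := reach_theta (ρ := ρ) (hX _ hx)
      rwa [M.θ_invol] at this

theorem reach_equivalence (hX : M.IsEdgeSet X) : Equivalence (M.reach ρ X) :=
  ⟨fun _ => .refl, reach_symm hX, .trans⟩

variable (M) in
def numComponents (ρ : Equiv.Perm M.D) (X : Set M.D) : ℕ := Nat.card (Quot (M.reach ρ X))

theorem numComponents_empty (ρ : Equiv.Perm M.D) :
    M.numComponents ρ ∅ = Nat.card (Quotient (sameCycleSetoid ρ)) := by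
  refine Nat.card_congr (Quot.congrRight fun a b => ⟨fun h => ?_, reach_of_sameCycle⟩)
  induction h with
  | refl => exact .refl _ _
  | tail _ hxy ih =>
    rcases hxy with rfl | ⟨hx, -⟩
    · exact Equiv.Perm.sameCycle_apply_right.mpr ih
    · exact absurd hx (Set.notMem_empty _)

theorem numComponents_le_one (h : ∀ a b, M.reach ρ X a b) : M.numComponents ρ X ≤ 1 :=
  Finite.card_le_one_iff_subsingleton.mpr ⟨by rintro ⟨a⟩ ⟨b⟩; exact Quot.sound (h a b)⟩

theorem reach_diff_pair_or (hX : M.IsEdgeSet X) (h : M.reach ρ X b c) :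
    M.reach ρ (X \ {a, M.θ a}) b c ∨
      ((M.reach ρ (X \ {a, M.θ a}) b a ∨ M.reach ρ (X \ {a, M.θ a}) b (M.θ a)) ∧
        (M.reach ρ (X \ {a, M.θ a}) c a ∨ M.reach ρ (X \ {a, M.θ a}) c (M.θ a))) := by
  set R := M.reach ρ (X \ {a, M.θ a})
  have hR : Equivalence R := reach_equivalence (hX.diff_pair a)
  have hA : ∀ {x y}, R x y → (R x a ∨ R x (M.θ a)) → (R y a ∨ R y (M.θ a)) := fun hxy =>
    Or.imp (hR.trans (hR.symm hxy)) (hR.trans (hR.symm hxy))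
  induction h with
  | refl => exact .inl .refl
  | @tail x y _ hxy ih =>
    have hstep : R x y ∨ ((R x a ∨ R x (M.θ a)) ∧ (R y a ∨ R y (M.θ a))) := by
      rcases hxy with rfl | ⟨hx, rfl⟩
      · exact .inl (reach_rotate x)
      by_cases hxa : x ∈ ({a, M.θ a} : Set M.D)
      · rcases hxa with rfl | rfl
        · exact .inr ⟨.inl .refl, .inr .refl⟩
        · exact .inr ⟨.inr .refl, .inl (by rw [M.θ_invol]; exact .refl)⟩
      · exact .inl (reach_theta ⟨hx, hxa⟩)
    rcases ih with hbx | ⟨hb, hx⟩ <;> rcases hstep with hxy | ⟨hx', hy⟩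
    · exact .inl (hbx.trans hxy)
    · exact .inr ⟨hA (hR.symm hbx) hx', hy⟩
    · exact .inr ⟨hb, hA hxy hx⟩
    · exact .inr ⟨hb, hy⟩

theorem numComponents_diff_pair_le (hX : M.IsEdgeSet X) (a : M.D) :
    M.numComponents ρ (X \ {a, M.θ a}) ≤ M.numComponents ρ X + 1 := by
  set R := M.reach ρ (X \ {a, M.θ a})
  have hR : Equivalence R := reach_equivalence (hX.diff_pair a)
  let f : Quot R → Quot (M.reach ρ X) ⊕ Unit :=
    Quot.lift (fun b => if R b a then .inr () else .inl (Quot.mk _ b)) fun b c hbc => by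
      simp only [show R b a ↔ R c a from ⟨hR.trans (hR.symm hbc), hR.trans hbc⟩]
      split_ifs
      · rfl
      · exact congrArg _ (Quot.sound (reach_mono Set.sdiff_subset hbc))
  have hf : Function.Injective f := by
    rintro ⟨b⟩ ⟨c⟩ hbc
    apply Quot.sound
    by_cases hb : R b a <;> by_cases hc : R c a <;>
      simp only [f, hb, hc, ↓reduceIte, reduceCtorEq, Sum.inl.injEq] at hbc
    · exact hR.trans hb (hR.symm hc)
    · have hbc' := (reach_equivalence hX).eqvGen_iff.mp (Quot.eq.mp hbc)
      rcases reach_diff_pair_or hX hbc' with h | ⟨hb' | hb', hc' | hc'⟩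
      exacts [h, absurd hb' hb, absurd hb' hb, absurd hc' hc, hR.trans hb' (hR.symm hc')]
  calc M.numComponents ρ (X \ {a, M.θ a}) ≤ Nat.card (Quot (M.reach ρ X) ⊕ Unit) :=
        Nat.card_le_card_of_injective f hf
    _ = M.numComponents ρ X + 1 := by rw [Nat.card_sum, Nat.card_unique (α := Unit)]; rfl

/-- Each edge merges at most two components. -/
theorem two_mul_card_le (ρ : Equiv.Perm M.D) (hX : M.IsEdgeSet X) :
    2 * Nat.card (Quotient (sameCycleSetoid ρ)) ≤ 2 * M.numComponents ρ X + X.ncard := by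
  induction hn : X.ncard using Nat.strong_induction_on generalizing X with
  | _ n ih =>
    rcases X.eq_empty_or_nonempty with rfl | ⟨a, ha⟩
    · rw [numComponents_empty]
      omega
    have hcard := ncard_diff_pair_add_two hX ha
    have := ih _ (by omega) (hX.diff_pair a) rfl
    have := numComponents_diff_pair_le (ρ := ρ) hX a
    omega

theorem sameCycle_theta_iff : M.θ.SameCycle a b ↔ b = a ∨ b = M.θ a := by
  refine ⟨fun h => ?_, by rintro (rfl | rfl); exacts [.refl _ _, ⟨1, rfl⟩]⟩
  obtain ⟨n, rfl⟩ := h.exists_nat_pow_eq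
  clear h
  induction n with
  | zero => exact .inl rfl
  | succ n ih =>
    rw [pow_succ', Equiv.Perm.mul_apply]
    rcases ih with h | h <;> rw [h]
    · exact .inr rfl
    · exact .inl (M.θ_invol a)

variable (M) in
theorem card_eq_two_mul_card_edges :
    Nat.card M.D = 2 * Nat.card (Quotient (sameCycleSetoid M.θ)) := by
  have hfiber : ∀ q : Quotient (sameCycleSetoid M.θ),
      (Finset.univ.filter fun b => Quotient.mk _ b = q).card = 2 := by
    refine Quotient.ind fun a => Finset.card_eq_two.mpr ⟨a, M.θ a, (M.θ_ne a).symm, ?_⟩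
    ext b
    simp only [Finset.mem_filter, Finset.mem_univ, true_and, Finset.mem_insert,
      Finset.mem_singleton, Quotient.eq]
    exact Equiv.Perm.sameCycle_comm.trans sameCycle_theta_iff
  rw [Nat.card_eq_fintype_card, Nat.card_eq_fintype_card, ← Finset.card_univ,
    Finset.card_eq_sum_card_fiberwise (f := Quotient.mk (sameCycleSetoid M.θ))
      (t := Finset.univ) (by simp),
    Finset.sum_const_nat fun q _ => hfiber q, Finset.card_univ, mul_comm]

theorem isCycleIn_of_injective {ℓ : ℕ} [NeZero ℓ] (c : ZMod ℓ → M.D)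
    (hlink : ∀ i, ρ.SameCycle (M.θ (c i)) (c (i + 1)))
    (hinj : ∀ i j, ρ.SameCycle (M.θ (c i)) (M.θ (c j)) → i = j)
    (hback : ∀ i, c (i + 1) ≠ M.θ (c i)) : M.IsCycleIn ρ ℓ c := by
  have htail : ∀ i, ρ.SameCycle (M.θ (c (i - 1))) (c i) := fun i => by
    simpa using hlink (i - 1)
  refine ⟨Nat.pos_of_neZero ℓ, hlink, fun i j h => ?_, fun i j h => ?_⟩
  · exact sub_left_inj.mp (hinj _ _ (((htail i).trans h).trans (htail j).symm))
  rcases h with h | h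
  · exact hinj i j (h ▸ .refl _ _)
  · have hij : i = j - 1 := hinj _ _ (by rw [h, M.θ_invol]; exact (htail j).symm)
    refine absurd ?_ (hback (j - 1))
    rw [sub_add_cancel, ← hij, h, M.θ_invol]

variable (M) in
/-- `d 1, …, d m` are the darts of a walk in `X` entered through the dart `d 0`; its vertices,
those of `θ (d 0), …, θ (d m)`, are pairwise distinct. -/
def IsPath (ρ : Equiv.Perm M.D) (X : Set M.D) (d : ℕ → M.D) (m : ℕ) : Prop :=
  (∀ i, 0 < i → i ≤ m → d i ∈ X) ∧
    (∀ i < m, ρ.SameCycle (M.θ (d i)) (d (i + 1))) ∧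
    ∀ i ≤ m, ∀ j ≤ m, ρ.SameCycle (M.θ (d i)) (M.θ (d j)) → i = j

theorem IsPath.of_le {d : ℕ → M.D} {m k : ℕ} (hd : M.IsPath ρ X d m) (hk : k ≤ m) :
    M.IsPath ρ X d k :=
  ⟨fun i hi hik => hd.1 i hi (hik.trans hk), fun i hi => hd.2.1 i (by omega),
    fun i hi j hj => hd.2.2 i (hi.trans hk) j (hj.trans hk)⟩

theorem IsPath.snoc {d : ℕ → M.D} {m : ℕ} (hd : M.IsPath ρ X d m) (hx : a ∈ X)
    (hlink : ρ.SameCycle (M.θ (d m)) a)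
    (hnew : ∀ k ≤ m, ¬ ρ.SameCycle (M.θ (d k)) (M.θ a)) :
    M.IsPath ρ X (fun i => if i ≤ m then d i else a) (m + 1) := by
  obtain ⟨hX, hd, hinj⟩ := hd
  refine ⟨fun i hi him => ?_, fun i hi => ?_, fun i hi j hj h => ?_⟩
  · dsimp only
    split_ifs
    exacts [hX i hi (by omega), hx]
  · rcases Nat.lt_or_ge i m with him | him
    · simpa [show i ≤ m by omega, show i + 1 ≤ m by omega] using hd i him
    · simpa [show i = m by omega] using hlink
  · by_cases him : i ≤ m <;> by_cases hjm : j ≤ m <;>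
      simp only [him, hjm, if_true, if_false] at h
    · exact hinj i him j hjm h
    · exact absurd h (hnew i him)
    · exact absurd h.symm (hnew j hjm)
    · omega

theorem exists_isPath_of_reach (h : M.reach ρ X b c) :
    ∃ d m, M.IsPath ρ X d m ∧ d 0 = M.θ b ∧ ρ.SameCycle (M.θ (d m)) c := by
  induction h with
  | refl =>
    refine ⟨fun _ => M.θ b, 0, ⟨fun i hi hi0 => by omega, fun i hi => by omega,
      fun i hi j hj _ => by omega⟩, rfl, ?_⟩
    rw [M.θ_invol]
  | @tail x y _ hxy ih =>
    obtain ⟨d, m, hd, hd0, hdm⟩ := ih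
    rcases hxy with rfl | ⟨hx, rfl⟩
    · exact ⟨d, m, hd, hd0, Equiv.Perm.sameCycle_apply_right.mpr hdm⟩
    by_cases hk : ∃ k ≤ m, ρ.SameCycle (M.θ (d k)) (M.θ x)
    · obtain ⟨k, hk, hdk⟩ := hk
      exact ⟨d, k, hd.of_le hk, hd0, hdk⟩
    · push Not at hk
      exact ⟨_, m + 1, hd.snoc hx hdm hk, by simpa using hd0,
        by simpa using Equiv.Perm.SameCycle.refl _ _⟩

theorem IsPath.isCycleIn {d : ℕ → M.D} {m : ℕ} (hd : M.IsPath ρ X d m)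
    (hclose : ρ.SameCycle (M.θ (d m)) (d 0))
    (hback : ∀ i, 0 < i → i ≤ m → d i ≠ M.θ (d 0)) :
    M.IsCycleIn ρ (m + 1) (fun i => d i.val) := by
  obtain ⟨-, hlink, hinj⟩ := hd
  have hval := fun i : ZMod (m + 1) => Nat.lt_succ_iff.mp (ZMod.val_lt i)
  refine isCycleIn_of_injective _ (fun i => ?_) (fun i j h => ZMod.val_injective _
    (hinj _ (hval i) _ (hval j) h)) (fun i h => ?_)
  · have hi := hval i
    rw [ZMod.val_add_one]
    split_ifs with him
    · rwa [him]
    · exact hlink _ (by omega)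
  · have hi := hval i
    rw [ZMod.val_add_one] at h
    split_ifs at h with him
    · rcases Nat.eq_zero_or_pos m with hm | hm
      · exact M.θ_ne _ (by rw [← h, him, hm])
      · exact hback m hm le_rfl (by rw [← him, h, M.θ_invol])
    · rcases Nat.eq_zero_or_pos i.val with hi0 | hi0
      · exact hback 1 one_pos (by omega) (by simpa [hi0] using h)
      · have hprev : ρ.SameCycle (M.θ (d (i.val + 1))) (M.θ (d (i.val - 1))) := by
          rw [h, M.θ_invol]
          simpa [Nat.sub_add_cancel hi0] using (hlink (i.val - 1) (by omega)).symm
        have := hinj _ (by omega) _ (by omega) hprev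
        omega

theorem not_reach_diff_pair_of_acyclic
    (hacyc : ∀ ℓ c, M.IsCycleIn ρ ℓ c → ∃ i, c i ∉ X) (ha : a ∈ X) :
    ¬ M.reach ρ (X \ {a, M.θ a}) (M.θ a) a := by
  intro h
  obtain ⟨d, m, hd, hd0, hdm⟩ := exists_isPath_of_reach h
  rw [M.θ_invol] at hd0
  subst hd0
  have hcyc := hd.isCycleIn hdm fun i hi him h => (hd.1 i hi him).2 (.inr h)
  obtain ⟨i, hi⟩ := hacyc _ _ hcyc
  rcases Nat.eq_zero_or_pos i.val with h0 | h0
  · exact hi (by rwa [h0])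
  · exact hi (hd.1 _ h0 (Nat.lt_succ_iff.mp (ZMod.val_lt i))).1

theorem reach_diff_pair_of_isCycleIn {ℓ : ℕ} {c : ZMod ℓ → M.D} (hc : M.IsCycleIn ρ ℓ c)
    (hX : ∀ i, c i ∈ X) : M.reach ρ (X \ {c 0, M.θ (c 0)}) (M.θ (c 0)) (c 0) := by
  obtain ⟨hℓ, hlink, -, hedge⟩ := hc
  have hmem : ∀ i, i ≠ 0 → c i ∈ X \ {c 0, M.θ (c 0)} := fun i hi =>
    ⟨hX i, fun h => hi (hedge i 0 (by simpa using h))⟩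
  have hwalk : ∀ n : ℕ, 0 < n → n ≤ ℓ →
      M.reach ρ (X \ {c 0, M.θ (c 0)}) (M.θ (c 0)) (c n) := by
    intro n hn hnℓ
    induction n with
    | zero => omega
    | succ n ih =>
      rcases Nat.eq_zero_or_pos n with rfl | hn
      · exact reach_of_sameCycle (by simpa using hlink 0)
      have hcn : ((n : ℕ) : ZMod ℓ) ≠ 0 := by
        rw [Ne, ZMod.natCast_eq_zero_iff]
        exact Nat.not_dvd_of_pos_of_lt hn (by omega)
      refine ((ih hn (by omega)).trans (reach_theta (hmem _ hcn))).trans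
        (reach_of_sameCycle ?_)
      simpa using hlink n
  simpa using hwalk ℓ hℓ le_rfl

theorem reach_diff_pair_of_reach (hX : M.IsEdgeSet X)
    (ha : M.reach ρ (X \ {a, M.θ a}) (M.θ a) a) {x y : M.D} (h : M.reach ρ X x y) :
    M.reach ρ (X \ {a, M.θ a}) x y := by
  refine Relation.reflTransGen_closed (fun x y hxy => ?_) x y h
  rcases hxy with rfl | ⟨hx, rfl⟩
  · exact reach_rotate x
  by_cases hxa : x ∈ ({a, M.θ a} : Set M.D)
  · rcases hxa with rfl | rfl
    · exact reach_symm (hX.diff_pair x) ha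
    · rwa [M.θ_invol]
  · exact reach_theta ⟨hx, hxa⟩

theorem sum_eq_zero_of_theta_invariant (A : Finset M.D) (hA : ∀ x ∈ A, M.θ x ∈ A)
    (g : M.D → ZMod 2) (hg : ∀ x, g (M.θ x) = g x) : ∑ x ∈ A, g x = 0 :=
  Finset.sum_involution (fun x _ => M.θ x) (fun x _ => by rw [hg, CharTwo.add_self_eq_zero])
    (fun x _ _ => M.θ_ne x) hA (fun x _ => M.θ_invol x)

/-- Count modulo 2 the darts `x` of the component `Q` of `θ w` in `S \ {w, θ w}` at which
`P` changes between `x` and `σ x`: their number is even since `Q` is `σ`-invariant, but odd if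
`w ∉ Q`, since they come in pairs `x, θ x` except for `θ w`. -/
theorem reach_diff_pair_of_separating (hS : M.IsEdgeSet S) {P : Set M.D} {w : M.D}
    (hwS : w ∈ S) (hw : w ∈ P) (hθw : M.θ w ∉ P)
    (hPS : ∀ x ∉ S, M.θ x ∈ P ↔ x ∈ P) (hPσ : ∀ x, M.σ x ∈ P ↔ M.θ x ∈ P) :
    M.reach M.σ (S \ {w, M.θ w}) (M.θ w) w := by
  by_contra hwQ
  set S' := S \ {w, M.θ w}
  set Q : Finset M.D := Finset.univ.filter (M.reach M.σ S' (M.θ w))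
  let f : M.D → ZMod 2 := fun x => if x ∈ P then 1 else 0
  let g : M.D → ZMod 2 := fun x => f x + f (M.θ x)
  have hg : ∀ x, g (M.θ x) = g x := fun x => by
    simp only [g]
    rw [M.θ_invol, add_comm]
  have hQσ : ∀ x, x ∈ Q ↔ M.σ x ∈ Q := fun x => by
    simp only [Q, Finset.mem_filter, Finset.mem_univ, true_and]
    exact ⟨fun h => h.trans (reach_rotate x), fun h => h.trans
      (reach_of_sameCycle (Equiv.Perm.sameCycle_apply_left.mpr (.refl _ _)))⟩
  have hzero : ∑ x ∈ Q, g x = 0 := by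
    have hσ : ∑ x ∈ Q, f (M.σ x) = ∑ x ∈ Q, f x :=
      Finset.sum_equiv M.σ hQσ fun _ _ => rfl
    have hfσ : ∀ x, f (M.σ x) = f (M.θ x) := fun x => by simp only [f, hPσ]
    simp only [g, ← hfσ, Finset.sum_add_distrib, hσ, CharTwo.add_self_eq_zero]
  have hone : ∑ x ∈ Q, g x = 1 := by
    rw [← Finset.sum_filter_add_sum_filter_not Q (· ∈ S'), sum_eq_zero_of_theta_invariant _
      (fun x hx => ?_) g hg, zero_add, Finset.sum_eq_single_of_mem (M.θ w) ?_ fun x hx hxw => ?_]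
    · show f (M.θ w) + f (M.θ (M.θ w)) = 1
      simp [f, M.θ_invol w, hw, hθw]
    · simp only [Q, Finset.mem_filter, Finset.mem_univ, true_and]
      exact ⟨.refl, fun h => h.2 (.inr rfl)⟩
    · simp only [Q, Finset.mem_filter, Finset.mem_univ, true_and] at hx
      have hxS : x ∉ S := fun hxS =>
        hx.2 ⟨hxS, by rintro (rfl | rfl); exacts [hwQ hx.1, hxw rfl]⟩
      simp only [g, f, hPS x hxS, CharTwo.add_self_eq_zero]
    · simp only [Q, Finset.mem_filter, Finset.mem_univ, true_and] at hx ⊢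
      exact ⟨hx.1.trans (reach_theta hx.2), hS.diff_pair w x hx.2⟩
  exact zero_ne_one (hzero.symm.trans hone)

theorem reach_dual_compl (hS : M.IsEdgeSet S)
    (hbridge : ∀ w ∈ S, ¬ M.reach M.σ (S \ {w, M.θ w}) (M.θ w) w) (a b : M.D) :
    M.reach (M.σ * M.θ) Sᶜ a b := by
  by_contra hab
  set P := {x | M.reach (M.σ * M.θ) Sᶜ a x}
  have hP : ∀ {x y}, M.reach (M.σ * M.θ) Sᶜ x y → (x ∈ P ↔ y ∈ P) := fun h =>
    ⟨fun hx => hx.trans h, fun hy => hy.trans (reach_symm hS.compl h)⟩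
  have hPσ : ∀ x, M.σ x ∈ P ↔ M.θ x ∈ P := fun x => by
    simpa [M.θ_invol x] using (hP (reach_rotate (X := Sᶜ) (M.θ x))).symm
  have hPS : ∀ x ∉ S, M.θ x ∈ P ↔ x ∈ P := fun x hx => (hP (reach_theta hx)).symm
  obtain ⟨w, hw, hθw⟩ : ∃ w ∈ P, M.θ w ∉ P := by
    by_contra! hθ
    suffices b ∈ P from hab this
    clear hab
    induction M.connected a b with
    | refl => exact .refl
    | tail _ hxy ih =>
      rcases hxy with rfl | rfl
      · exact (hPσ _).mpr (hθ _ ih)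
      · exact hθ _ ih
  have hwS : w ∈ S := by
    by_contra hwS
    exact hθw ((hPS w hwS).mpr hw)
  exact hbridge w hwS (reach_diff_pair_of_separating hS hwS hw hθw hPS hPσ)

theorem card_vertices_add_card_faces_le (hS : M.IsEdgeSet S)
    (hconn : ∀ x y, M.reach M.σ S x y) {a : M.D} (ha : a ∉ S)
    (hdual : ∀ x y, M.reach (M.σ * M.θ) (Sᶜ \ {a, M.θ a}) x y) :
    Nat.card (Quotient (sameCycleSetoid M.σ)) +
        Nat.card (Quotient (sameCycleSetoid (M.σ * M.θ))) ≤
      Nat.card (Quotient (sameCycleSetoid M.θ)) + 1 := by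
  have hV := two_mul_card_le M.σ hS
  have hF := two_mul_card_le (M.σ * M.θ) (hS.compl.diff_pair a)
  have hc := numComponents_le_one hconn
  have hc' := numComponents_le_one hdual
  have hdiff := ncard_diff_pair_add_two hS.compl ha
  have hD := Set.ncard_add_ncard_compl S
  have hE := card_eq_two_mul_card_edges M
  omega

end PlaneMap

/-- The complemented dual of a spanning tree of a connected plane graph `G`
is a spanning tree of the dual graph `G*`: the edges of `G*` dual to the edges of `G` not in a
spanning tree `T` form a spanning tree of `G*`. -/
theorem stmt15 (M : PlaneMap) (S : Set M.D) (hθ : ∀ a, a ∈ S → M.θ a ∈ S)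
    (hT : M.IsSpanningTree S) : M.IsDualSpanningTree Sᶜ := by
  have hS : M.IsEdgeSet S := hθ
  have hdual : ∀ a b, M.reach (M.σ * M.θ) Sᶜ a b :=
    PlaneMap.reach_dual_compl hS fun w hw => PlaneMap.not_reach_diff_pair_of_acyclic hT.2 hw
  refine ⟨hdual, fun ℓ c hc => ?_⟩
  by_contra! hcS
  have hdual' : ∀ a b, M.reach (M.σ * M.θ) (Sᶜ \ {c 0, M.θ (c 0)}) a b := fun a b =>
    PlaneMap.reach_diff_pair_of_reach hS.compl (PlaneMap.reach_diff_pair_of_isCycleIn hc hcS)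
      (hdual a b)
  have := PlaneMap.card_vertices_add_card_faces_le hS hT.1 (hcS 0) hdual'
  have := M.euler
  omega
end
end
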